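/- arXiv:1111.4319 — 8 statements merged into one kernel-verified Lean document; each statement's English description precedes it below -/
import Mathlib

section
/- Let q be a prime power and let 1 ≤ r ≤ k ≤ n be integers. Then 𝒞_q(n,k,r) ≥ ⌈ ((q^n−1)/(q^k−1)) · 𝒞_q(n−1,k−1,r−1) ⌉ (the q-analog of the Schönheim bound). -/
/-!
Double count the incidences `(v, X)` between nonzero vectors `v` and blocks `X` of an optimal
covering design `S`. Every block contains exactly `q ^ k - 1` nonzero vectors. Conversely, the
blocks through a fixed `v ≠ 0`, taken modulo `⟨v⟩`, form a `(k - 1, r - 1)` covering design of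
`F ^ n / ⟨v⟩ ≃ F ^ (n - 1)`, because an `(r - 1)`-subspace of the quotient lifts to an
`r`-subspace containing `v`; so at least `𝒞_q(n - 1, k - 1, r - 1)` blocks pass through `v`.
-/

open Module

/-- `coveringNumber F n k r` is the minimum number of `k`-dimensional `F`-linear subspaces
of `F^n` needed so that every `r`-dimensional subspace is contained in at least one of them. -/
noncomputable def coveringNumber (F : Type) [Field F] (n k r : ℕ) : ℕ :=
  sInf { m : ℕ | ∃ S : Finset (Submodule F (Fin n → F)),
    S.card = m ∧
    (∀ X ∈ S, finrank F X = k) ∧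
    (∀ Y : Submodule F (Fin n → F), finrank F Y = r → ∃ X ∈ S, Y ≤ X) }

open Finset

namespace Submodule

variable {K V : Type*} [Field K] [AddCommGroup V] [Module K V] [FiniteDimensional K V]

theorem finrank_map_mkQ_add_finrank {P X : Submodule K V} (hPX : P ≤ X) :
    finrank K (X.map P.mkQ) + finrank K P = finrank K X := by
  have h := LinearMap.finrank_range_add_finrank_ker (P.mkQ.domRestrict X)
  rwa [LinearMap.range_domRestrict, LinearMap.ker_domRestrict, ker_mkQ,
    (comapSubtypeEquivOfLe hPX).finrank_eq] at h

theorem finrank_comap_mkQ (P : Submodule K V) (W : Submodule K (V ⧸ P)) :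
    finrank K (W.comap P.mkQ) = finrank K W + finrank K P := by
  conv_rhs => rw [← map_comap_eq_of_surjective P.mkQ_surjective W]
  exact (finrank_map_mkQ_add_finrank (le_comap_mkQ P W)).symm

theorem exists_le_finrank_eq (Y : Submodule K V) {j : ℕ} (hYj : finrank K Y ≤ j)
    (hj : j ≤ finrank K V) : ∃ X : Submodule K V, Y ≤ X ∧ finrank K X = j := by
  obtain ⟨s, hs, hind⟩ := exists_finset_linearIndependent_of_le_finrank (R := K)
    (M := V ⧸ Y) (n := j - finrank K Y) (by rw [finrank_quotient]; omega)
  refine ⟨(span K (s : Set (V ⧸ Y))).comap Y.mkQ, le_comap_mkQ Y _, ?_⟩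
  rw [finrank_comap_mkQ, finrank_span_finset_eq_card hind, hs]
  omega

end Submodule

section Covering

variable {K V : Type*} [Field K] [AddCommGroup V] [Module K V]

def IsSubspaceCovering (S : Finset (Submodule K V)) (k r : ℕ) : Prop :=
  (∀ X ∈ S, finrank K X = k) ∧ ∀ Y : Submodule K V, finrank K Y = r → ∃ X ∈ S, Y ≤ X

theorem exists_isSubspaceCovering [Finite K] [FiniteDimensional K V] {k r : ℕ} (hrk : r ≤ k)
    (hk : k ≤ finrank K V) : ∃ S : Finset (Submodule K V), IsSubspaceCovering S k r := by
  have : Finite V := Module.finite_of_finite K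
  have : Finite (Submodule K V) := Finite.of_injective _ SetLike.coe_injective
  refine ⟨(Set.toFinite {X : Submodule K V | finrank K X = k}).toFinset, by simp,
    fun Y hY => ?_⟩
  obtain ⟨X, hYX, hX⟩ := Y.exists_le_finrank_eq (hY.trans_le hrk) hk
  exact ⟨X, by simpa using hX, hYX⟩

theorem IsSubspaceCovering.image_map_equiv {W : Type*} [AddCommGroup W] [Module K W]
    {S : Finset (Submodule K V)} {k r : ℕ} (hS : IsSubspaceCovering S k r) (e : V ≃ₗ[K] W) :
    IsSubspaceCovering (S.image fun X => X.map (e : V →ₗ[K] W)) k r := by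
  refine ⟨?_, fun Y hY => ?_⟩
  · simp only [mem_image, forall_exists_index, and_imp, forall_apply_eq_imp_iff₂]
    intro X hX
    rw [LinearEquiv.finrank_map_eq, hS.1 X hX]
  · obtain ⟨X, hXS, hYX⟩ := hS.2 (Y.map (e.symm : W →ₗ[K] V))
      (by rwa [LinearEquiv.finrank_map_eq])
    refine ⟨X.map (e : V →ₗ[K] W), mem_image_of_mem _ hXS, ?_⟩
    rw [Submodule.map_equiv_eq_comap_symm, ← Submodule.map_le_iff_le_comap]
    exact hYX

theorem IsSubspaceCovering.image_mkQ [FiniteDimensional K V] {S : Finset (Submodule K V)}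
    {k r : ℕ} (hS : IsSubspaceCovering S k r) (hr : 1 ≤ r) {v : V} (hv : v ≠ 0)
    [DecidablePred (v ∈ · : Submodule K V → Prop)] :
    IsSubspaceCovering ({X ∈ S | v ∈ X}.image fun X => X.map (K ∙ v).mkQ)
      (k - 1) (r - 1) := by
  have hP : finrank K (K ∙ v) = 1 := finrank_span_singleton hv
  refine ⟨?_, fun Y hY => ?_⟩
  · simp only [mem_image, mem_filter, forall_exists_index, and_imp]
    rintro _ X hXS hvX rfl
    have h := Submodule.finrank_map_mkQ_add_finrank
      ((Submodule.span_singleton_le_iff_mem v X).mpr hvX)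
    rw [hP, hS.1 X hXS] at h
    omega
  · have hY' : finrank K (Y.comap (K ∙ v).mkQ) = r := by
      rw [Submodule.finrank_comap_mkQ, hY, hP]
      omega
    obtain ⟨X, hXS, hYX⟩ := hS.2 _ hY'
    have hvX : v ∈ X := hYX (Submodule.le_comap_mkQ _ Y (Submodule.mem_span_singleton_self v))
    refine ⟨X.map (K ∙ v).mkQ, mem_image_of_mem _ (mem_filter.mpr ⟨hXS, hvX⟩), ?_⟩
    rw [← Submodule.map_comap_eq_of_surjective (K ∙ v).mkQ_surjective Y]
    exact Submodule.map_mono hYX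

end Covering

theorem Submodule.card_filter_mem_erase_zero {K V : Type*} [Field K] [AddCommGroup V] [Module K V]
    [Fintype K] [Fintype V] [DecidableEq V] (X : Submodule K V) [DecidablePred (· ∈ X)] :
    #{v ∈ univ.erase 0 | v ∈ X} = Fintype.card K ^ finrank K X - 1 := by
  rw [filter_erase, card_erase_of_mem (mem_filter.mpr ⟨mem_univ _, X.zero_mem⟩),
    ← Fintype.card_subtype, ← card_eq_pow_finrank]

theorem coveringNumber_le_card {F : Type} [Field F] {n k r : ℕ}
    {S : Finset (Submodule F (Fin n → F))} (hS : IsSubspaceCovering S k r) :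
    coveringNumber F n k r ≤ #S :=
  Nat.sInf_le ⟨S, rfl, hS⟩

theorem exists_card_eq_coveringNumber (F : Type) [Field F] [Finite F] {n k r : ℕ}
    (hrk : r ≤ k) (hkn : k ≤ n) :
    ∃ S : Finset (Submodule F (Fin n → F)), #S = coveringNumber F n k r ∧
      IsSubspaceCovering S k r := by
  obtain ⟨S, hS⟩ := exists_isSubspaceCovering (K := F) (V := Fin n → F) hrk
    (by rwa [finrank_fin_fun])
  exact Nat.sInf_mem (s := {m | ∃ S : Finset (Submodule F (Fin n → F)), #S = m ∧
    IsSubspaceCovering S k r}) ⟨#S, S, rfl, hS⟩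

theorem coveringNumber_pred_le_card_filter_mem {F : Type} [Field F] {n k r : ℕ}
    {S : Finset (Submodule F (Fin n → F))} (hS : IsSubspaceCovering S k r) (hr : 1 ≤ r)
    {v : Fin n → F} (hv : v ≠ 0)
    [DecidablePred (v ∈ · : Submodule F (Fin n → F) → Prop)] :
    coveringNumber F (n - 1) (k - 1) (r - 1) ≤ #{X ∈ S | v ∈ X} := by
  obtain ⟨e⟩ : Nonempty (((Fin n → F) ⧸ (F ∙ v)) ≃ₗ[F] (Fin (n - 1) → F)) :=
    FiniteDimensional.nonempty_linearEquiv_of_finrank_eq (by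
      rw [Submodule.finrank_quotient, finrank_span_singleton hv, finrank_fin_fun, finrank_fin_fun])
  calc coveringNumber F (n - 1) (k - 1) (r - 1)
      ≤ #(({X ∈ S | v ∈ X}.image fun X => X.map (F ∙ v).mkQ).image
          fun X => X.map (e : _ →ₗ[F] _)) :=
        coveringNumber_le_card ((hS.image_mkQ hr hv).image_map_equiv e)
    _ ≤ #{X ∈ S | v ∈ X} := card_image_le.trans card_image_le

theorem schonheim_bound_general (q n k r : ℕ)
    (hr : 1 ≤ r) (hrk : r ≤ k) (hkn : k ≤ n)
    (F : Type) [Field F] [Fintype F] (hF : Fintype.card F = q) :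
    (coveringNumber F n k r : ℤ) ≥
      ⌈(((q : ℚ) ^ n - 1) / ((q : ℚ) ^ k - 1)) *
        (coveringNumber F (n - 1) (k - 1) (r - 1) : ℚ)⌉ := by
  classical
  obtain ⟨S, hcard, hS⟩ := exists_card_eq_coveringNumber F hrk hkn
  have hcount : #(univ.erase (0 : Fin n → F)) * coveringNumber F (n - 1) (k - 1) (r - 1) ≤
      #S * (q ^ k - 1) :=
    card_mul_le_card_mul (fun v X => v ∈ X)
      (fun v hv => coveringNumber_pred_le_card_filter_mem hS hr (ne_of_mem_erase hv))
      (fun X hX => (X.card_filter_mem_erase_zero).trans_le (by rw [hS.1 X hX, hF]))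
  rw [card_erase_of_mem (mem_univ _), card_univ, Fintype.card_fun, Fintype.card_fin, hF,
    hcard] at hcount
  have hq : 1 < q := hF ▸ Fintype.one_lt_card
  have hqk : 1 < q ^ k := Nat.one_lt_pow (by omega) hq
  have hqn : 1 ≤ q ^ n := Nat.one_le_pow _ _ (by omega)
  have hpos : (0 : ℚ) < (q : ℚ) ^ k - 1 := by
    rw [sub_pos]; exact_mod_cast hqk
  have hcast := (Nat.cast_le (α := ℚ)).mpr hcount
  push_cast [Nat.cast_sub hqn, Nat.cast_sub hqk.le] at hcast
  rw [ge_iff_le, Int.ceil_le, div_mul_eq_mul_div, div_le_iff₀ hpos]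
  exact_mod_cast hcast

/-- The q-analog of the Schönheim bound. -/
theorem schonheim_bound (q n k r : ℕ) (hq : IsPrimePow q)
    (hr : 1 ≤ r) (hrk : r ≤ k) (hkn : k ≤ n)
    (F : Type) [Field F] [Fintype F] (hF : Fintype.card F = q) :
    (coveringNumber F n k r : ℤ) ≥
      ⌈(((q : ℚ) ^ n - 1) / ((q : ℚ) ^ k - 1)) *
        (coveringNumber F (n - 1) (k - 1) (r - 1) : ℚ)⌉ :=
  schonheim_bound_general q n k r hr hrk hkn F hF
end

section
/- Let q be a prime power and let k, n be integers with 2 ≤ k ≤ n−1. Then, as an inequality of rational numbers, 𝒞_q(n,k,k−1) ≥ ((q^k−1)(q−1)/(q^{n−k}−1)^2) · [n,k+1]_q (the q-analog of de Caen's bound). -/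
open Module

/-- The Gaussian binomial coefficient `[n, k]_q`, as a rational number. -/
noncomputable def gaussBinom (q n k : ℕ) : ℚ :=
  ∏ i ∈ Finset.range k, (((q : ℚ) ^ (n - i) - 1) / ((q : ℚ) ^ (k - i) - 1))

/-! Let `S` be a covering and write `[m] = 1 + q + ⋯ + q^(m-1)`. For a `(k-1)`-space `T` let
`d T` be the number of members of `S` containing `T`, and for a `(k+1)`-space `U` let `b U` be
the number of members of `S` inside `U`. Double counting gives `∑ d = |S| [k]` and
`∑ b = |S| [n-k]`; since two distinct `k`-spaces meet in a `(k-1)`-space exactly when they span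
a `(k+1)`-space, also `∑ d (d - 1) = ∑ b (b - 1)`. Covering means `1 ≤ d T`, while `d T` is at
most the number `[n-k+1]` of all `k`-spaces through `T`; hence
`∑ d (d - 1) ≤ [n-k+1] (∑ d - [n, k-1])`, and Cauchy–Schwarz `(∑ b)² ≤ [n, k+1] ∑ b²` turns all
this into a quadratic inequality in `|S|` which forces `[k] [n, k+1] ≤ |S| [n-k]²`.
The subspace counts `[n, j]` themselves come from double counting lines inside `j`-spaces. -/

open Finset

section GaussBinom

variable {q : ℕ}

theorem gaussBinom_zero_right (n : ℕ) : gaussBinom q n 0 = 1 := by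
  simp [gaussBinom]

theorem gaussBinom_eq_div (n k : ℕ) :
    gaussBinom q n k =
      (∏ i ∈ range k, ((q : ℚ) ^ (n - i) - 1)) /
        ∏ i ∈ range k, ((q : ℚ) ^ (i + 1) - 1) := by
  rw [gaussBinom, prod_div_distrib, ← prod_range_reflect (fun i ↦ (q : ℚ) ^ (i + 1) - 1)]
  congr 1
  refine prod_congr rfl fun i hi ↦ ?_
  rw [mem_range] at hi
  congr 2
  omega

theorem natCast_pow_sub_one_ne_zero (hq : 1 < q) {j : ℕ} (hj : j ≠ 0) :
    (q : ℚ) ^ j - 1 ≠ 0 :=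
  sub_ne_zero.mpr (one_lt_pow₀ (by exact_mod_cast hq) hj).ne'

theorem prod_natCast_pow_succ_sub_one_ne_zero (hq : 1 < q) (k : ℕ) :
    ∏ i ∈ range k, ((q : ℚ) ^ (i + 1) - 1) ≠ 0 :=
  prod_ne_zero_iff.mpr fun _ _ ↦ natCast_pow_sub_one_ne_zero hq (Nat.succ_ne_zero _)

theorem gaussBinom_one_right (hq : 1 < q) (n : ℕ) :
    gaussBinom q n 1 = ∑ i ∈ range n, (q : ℚ) ^ i := by
  rw [gaussBinom, prod_range_one, Nat.sub_zero, Nat.sub_zero, pow_one,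
    div_eq_iff (by simpa using natCast_pow_sub_one_ne_zero hq one_ne_zero), geom_sum_mul]

theorem gaussBinom_succ_mul_geom_sum (hq : 1 < q) (m d : ℕ) :
    gaussBinom q m (d + 1) * ∑ i ∈ range (d + 1), (q : ℚ) ^ i =
      (∑ i ∈ range m, (q : ℚ) ^ i) * gaussBinom q (m - 1) d := by
  have hq1 : (q : ℚ) - 1 ≠ 0 := by simpa using natCast_pow_sub_one_ne_zero hq one_ne_zero
  rw [← mul_left_inj' hq1, mul_assoc, geom_sum_mul, mul_right_comm, geom_sum_mul,
    gaussBinom_eq_div, gaussBinom_eq_div, prod_range_succ', prod_range_succ,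
    div_mul_eq_mul_div, div_eq_iff (mul_ne_zero (prod_natCast_pow_succ_sub_one_ne_zero hq d)
      (natCast_pow_sub_one_ne_zero hq (Nat.succ_ne_zero d)))]
  simp_rw [Nat.sub_zero, Nat.sub_add_eq, Nat.sub_right_comm m]
  field_simp [prod_natCast_pow_succ_sub_one_ne_zero hq d]

theorem gaussBinom_succ_right_mul_geom_sum (hq : 1 < q) (n j : ℕ) :
    gaussBinom q n (j + 1) * ∑ i ∈ range (j + 1), (q : ℚ) ^ i =
      gaussBinom q n j * ∑ i ∈ range (n - j), (q : ℚ) ^ i := by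
  have hq1 : (q : ℚ) - 1 ≠ 0 := by simpa using natCast_pow_sub_one_ne_zero hq one_ne_zero
  rw [← mul_left_inj' hq1, mul_assoc, geom_sum_mul, mul_assoc, geom_sum_mul,
    gaussBinom_eq_div, gaussBinom_eq_div, prod_range_succ, prod_range_succ]
  field_simp [prod_natCast_pow_succ_sub_one_ne_zero hq j,
    natCast_pow_sub_one_ne_zero hq (Nat.succ_ne_zero j)]

theorem gaussBinom_self (hq : 1 < q) (n : ℕ) : gaussBinom q n n = 1 :=
  prod_eq_one fun i hi ↦
    div_self (natCast_pow_sub_one_ne_zero hq (by rw [mem_range] at hi; omega))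

theorem gaussBinom_sub_one_right (hq : 1 < q) {n : ℕ} (hn : 1 ≤ n) :
    gaussBinom q n (n - 1) = ∑ i ∈ range n, (q : ℚ) ^ i := by
  obtain ⟨j, rfl⟩ : ∃ j, n = j + 1 := ⟨n - 1, by omega⟩
  simpa [gaussBinom_self hq] using (gaussBinom_succ_right_mul_geom_sum hq (j + 1) j).symm

theorem gaussBinom_sub_one_mul_geom_sum_mul_geom_sum (hq : 1 < q) {n k : ℕ} (hk : 1 ≤ k)
    (hkn : k ≤ n) :
    gaussBinom q n (k - 1) * (∑ i ∈ range (n - k + 1), (q : ℚ) ^ i) *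
        ∑ i ∈ range (n - k), (q : ℚ) ^ i =
      gaussBinom q n (k + 1) * (∑ i ∈ range k, (q : ℚ) ^ i) *
        ∑ i ∈ range (k + 1), (q : ℚ) ^ i := by
  have hlow := gaussBinom_succ_right_mul_geom_sum hq n (k - 1)
  rw [Nat.sub_add_cancel hk, show n - (k - 1) = n - k + 1 by omega] at hlow
  linear_combination (-(∑ i ∈ range (n - k), (q : ℚ) ^ i)) * hlow -
    (∑ i ∈ range k, (q : ℚ) ^ i) * gaussBinom_succ_right_mul_geom_sum hq n k

theorem gaussBinom_pos (hq : 1 < q) {n k : ℕ} (hkn : k ≤ n) : 0 < gaussBinom q n k := by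
  refine prod_pos fun i hi ↦ div_pos ?_ ?_ <;> rw [mem_range] at hi
  all_goals
    rw [sub_pos]
    exact one_lt_pow₀ (by exact_mod_cast hq) (by omega)

end GaussBinom

section Arithmetic

variable {R : Type*} [CommRing R]

theorem geom_sum_succ_mul_add_comm (x : R) (a c : ℕ) :
    (∑ i ∈ range (a + 1), x ^ i) * ∑ i ∈ range c, x ^ i + ∑ i ∈ range a, x ^ i =
      (∑ i ∈ range (c + 1), x ^ i) * ∑ i ∈ range a, x ^ i + ∑ i ∈ range c, x ^ i := by
  rw [geom_sum_succ, geom_sum_succ]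
  ring

theorem natCast_card_offDiag {α : Type*} [DecidableEq α] (s : Finset α) :
    (#s.offDiag : R) = #s * (#s - 1) := by
  rw [offDiag_card, Nat.cast_sub (Nat.le_mul_self _)]
  push_cast
  ring

variable [LinearOrder R] [IsStrictOrderedRing R]

theorem sq_sum_le_of_sum_mul_sub_one_eq {ι κ : Type*} {s : Finset ι} {t : Finset κ}
    {d : ι → R} {b : κ → R} {M : R}
    (hpair : ∑ i ∈ s, d i * (d i - 1) = ∑ j ∈ t, b j * (b j - 1))
    (hd : ∀ i ∈ s, 1 ≤ d i ∧ d i ≤ M) :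
    (∑ j ∈ t, b j) ^ 2 ≤ #t * (∑ j ∈ t, b j + M * (∑ i ∈ s, d i - #s)) := by
  have hmoment : ∑ i ∈ s, d i * (d i - 1) ≤ M * (∑ i ∈ s, d i - #s) := by
    rw [← nsmul_one, ← sum_const, ← sum_sub_distrib, mul_sum]
    exact sum_le_sum fun i hi ↦
      mul_le_mul_of_nonneg_right (hd i hi).2 (sub_nonneg.mpr (hd i hi).1)
  calc (∑ j ∈ t, b j) ^ 2 ≤ #t * ∑ j ∈ t, b j ^ 2 := sq_sum_le_card_mul_sum_sq
    _ = #t * (∑ j ∈ t, b j + ∑ i ∈ s, d i * (d i - 1)) := by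
      rw [hpair, ← sum_add_distrib]
      congr 1
      exact sum_congr rfl fun j _ ↦ by ring
    _ ≤ #t * (∑ j ∈ t, b j + M * (∑ i ∈ s, d i - #s)) := by gcongr

/-- Once `g` and `M` are eliminated through `hg` and `hid`, `h` multiplied by `A` reads
`0 ≤ (y K' - s A) (s A² - y K)`, and the first factor is positive as soon as the second is
negative. -/
theorem le_mul_sq_of_sq_le {s y g K K' A M : R} (hA : 1 ≤ A) (hK : 0 ≤ K) (hKK' : K ≤ K')
    (hy : 0 ≤ y) (h : (s * A) ^ 2 ≤ y * (s * A + M * (s * K - g)))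
    (hg : g * M * A = y * K * K') (hid : M * K + A = K' * A + K) :
    y * K ≤ s * A ^ 2 := by
  have hA0 : 0 ≤ A := zero_le_one.trans hA
  have hfac : 0 ≤ (y * K' - s * A) * (s * A * A - y * K) := by
    linear_combination mul_le_mul_of_nonneg_left h hA0 - y * hg + y * s * A * hid
  by_contra! hlt
  have hsA : s * A < y * K' := by
    refine lt_of_mul_lt_mul_right ?_ hA0
    calc s * A * A = s * A ^ 2 := by ring
      _ < y * K := hlt
      _ ≤ y * K' * A := by
        rw [mul_assoc]
        exact mul_le_mul_of_nonneg_left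
          (hKK'.trans (le_mul_of_one_le_right (hK.trans hKK') hA)) hy
  have := mul_neg_of_pos_of_neg (sub_pos.mpr hsA) (by linarith : s * A * A - y * K < 0)
  linarith

end Arithmetic

instance Submodule.finite_of_finite {R M : Type*} [Semiring R] [AddCommMonoid M] [Module R M]
    [Finite M] : Finite (Submodule R M) :=
  Finite.of_injective _ SetLike.coe_injective

instance Submodule.Quotient.finite_of_finite {R M : Type*} [Ring R] [AddCommGroup M]
    [Module R M] [Finite M] (p : Submodule R M) : Finite (M ⧸ p) :=
  Finite.of_surjective _ p.mkQ_surjective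

section Grassmannian

open scoped Classical

variable {F V : Type*} [Field F] [AddCommGroup V] [Module F V] [Finite V]

variable (F V) in
noncomputable def grassmannian (j : ℕ) : Finset (Submodule F V) :=
  (Set.toFinite {X : Submodule F V | finrank F X = j}).toFinset

@[simp]
theorem mem_grassmannian {X : Submodule F V} {j : ℕ} :
    X ∈ grassmannian F V j ↔ finrank F X = j :=
  Set.Finite.mem_toFinset _

theorem grassmannian_zero : grassmannian F V 0 = {⊥} := by
  ext X
  simp [Submodule.finrank_eq_zero]

theorem card_filter_le_grassmannian (X : Submodule F V) (j : ℕ) :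
    #{T ∈ grassmannian F V j | T ≤ X} = #(grassmannian F X j) := by
  symm
  refine card_nbij' (fun W ↦ W.map X.subtype) (fun T ↦ T.comap X.subtype) ?_ ?_ ?_ ?_
  · intro W hW
    simp_all [Submodule.finrank_map_subtype_eq, Submodule.map_subtype_le]
  · intro T hT
    simp only [coe_filter, mem_grassmannian, Set.mem_ofPred_eq] at hT
    rw [mem_coe, mem_grassmannian, (Submodule.comapSubtypeEquivOfLe hT.2).finrank_eq, hT.1]
  · intro W _
    exact Submodule.comap_map_eq_of_injective X.injective_subtype W
  · intro T hT
    simp_all [Submodule.map_comap_subtype]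

theorem finrank_map_mkQ_add_finrank {L Y : Submodule F V} (h : L ≤ Y) :
    finrank F (Y.map L.mkQ) + finrank F L = finrank F Y := by
  have := LinearMap.finrank_range_add_finrank_ker (L.mkQ.comp Y.subtype)
  rwa [LinearMap.range_comp, Submodule.range_subtype, LinearMap.ker_comp, Submodule.ker_mkQ,
    (Submodule.comapSubtypeEquivOfLe h).finrank_eq] at this

theorem card_filter_ge_grassmannian (L : Submodule F V) (j : ℕ) :
    #{Y ∈ grassmannian F V (finrank F L + j) | L ≤ Y} = #(grassmannian F (V ⧸ L) j) := by
  symm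
  refine card_nbij' (fun W ↦ W.comap L.mkQ) (fun Y ↦ Y.map L.mkQ) ?_ ?_ ?_ ?_
  · intro W hW
    have := finrank_map_mkQ_add_finrank (Submodule.le_comap_mkQ L W)
    rw [Submodule.map_comap_eq_of_surjective L.mkQ_surjective] at this
    rw [mem_coe, mem_grassmannian] at hW
    simp only [coe_filter, Set.mem_ofPred_eq, mem_grassmannian]
    exact ⟨by omega, Submodule.le_comap_mkQ L W⟩
  · intro Y hY
    simp only [coe_filter, mem_grassmannian, Set.mem_ofPred_eq] at hY
    have := finrank_map_mkQ_add_finrank hY.2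
    rw [mem_coe, mem_grassmannian]
    dsimp only
    omega
  · intro W _
    exact Submodule.map_comap_eq_of_surjective L.mkQ_surjective W
  · intro Y hY
    simp_all [Submodule.comap_map_mkQ]

theorem finrank_inf_lt_of_ne {B B' : Submodule F V} (h : finrank F B = finrank F B')
    (hne : B ≠ B') : finrank F ↥(B ⊓ B') < finrank F B := by
  refine Submodule.finrank_lt_finrank_of_lt (lt_of_le_of_ne inf_le_left fun heq ↦ hne ?_)
  exact Submodule.eq_of_le_of_finrank_eq (heq ▸ inf_le_right) h

theorem finrank_lt_finrank_sup_of_ne {B B' : Submodule F V} (h : finrank F B = finrank F B')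
    (hne : B ≠ B') : finrank F B < finrank F ↥(B ⊔ B') := by
  refine Submodule.finrank_lt_finrank_of_lt (lt_of_le_of_ne le_sup_left fun heq ↦ hne ?_)
  exact (Submodule.eq_of_le_of_finrank_eq (heq ▸ le_sup_right) h.symm).symm

variable {S : Finset (Submodule F V)} {k : ℕ}

theorem sum_card_offDiag_filter_le (hS : ∀ X ∈ S, finrank F X = k) :
    ∑ T ∈ grassmannian F V (k - 1), #{B ∈ S | T ≤ B}.offDiag =
      #{p ∈ S.offDiag | finrank F ↥(p.1 ⊓ p.2 : Submodule F V) = k - 1} := by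
  rw [card_eq_sum_card_fiberwise (f := fun p ↦ p.1 ⊓ p.2) (t := grassmannian F V (k - 1))
    fun p hp ↦ by simpa using (mem_filter.mp hp).2]
  refine sum_congr rfl fun T hT ↦ ?_
  rw [mem_grassmannian] at hT
  congr 1
  ext ⟨B, B'⟩
  simp only [mem_offDiag, mem_filter]
  constructor
  · rintro ⟨⟨hB, hTB⟩, ⟨hB', hTB'⟩, hne⟩
    have hlt := finrank_inf_lt_of_ne ((hS B hB).trans (hS B' hB').symm) hne
    have hT_eq := Submodule.eq_of_le_of_finrank_le (le_inf hTB hTB')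
      (by rw [hS B hB] at hlt; omega)
    exact ⟨⟨⟨hB, hB', hne⟩, hT_eq ▸ hT⟩, hT_eq.symm⟩
  · rintro ⟨⟨⟨hB, hB', hne⟩, -⟩, rfl⟩
    exact ⟨⟨hB, inf_le_left⟩, ⟨hB', inf_le_right⟩, hne⟩

theorem sum_card_offDiag_filter_ge (hS : ∀ X ∈ S, finrank F X = k) :
    ∑ U ∈ grassmannian F V (k + 1), #{B ∈ S | B ≤ U}.offDiag =
      #{p ∈ S.offDiag | finrank F ↥(p.1 ⊔ p.2 : Submodule F V) = k + 1} := by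
  rw [card_eq_sum_card_fiberwise (f := fun p ↦ p.1 ⊔ p.2) (t := grassmannian F V (k + 1))
    fun p hp ↦ by simpa using (mem_filter.mp hp).2]
  refine sum_congr rfl fun U hU ↦ ?_
  rw [mem_grassmannian] at hU
  congr 1
  ext ⟨B, B'⟩
  simp only [mem_offDiag, mem_filter]
  constructor
  · rintro ⟨⟨hB, hBU⟩, ⟨hB', hB'U⟩, hne⟩
    have hlt := finrank_lt_finrank_sup_of_ne ((hS B hB).trans (hS B' hB').symm) hne
    have hU_eq := Submodule.eq_of_le_of_finrank_le (sup_le hBU hB'U)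
      (by rw [hS B hB] at hlt; omega)
    exact ⟨⟨⟨hB, hB', hne⟩, hU_eq ▸ hU⟩, hU_eq⟩
  · rintro ⟨⟨⟨hB, hB', hne⟩, -⟩, rfl⟩
    exact ⟨⟨hB, le_sup_left⟩, ⟨hB', le_sup_right⟩, hne⟩

theorem sum_card_offDiag_filter_le_eq_sum_card_offDiag_filter_ge
    (hS : ∀ X ∈ S, finrank F X = k) :
    ∑ T ∈ grassmannian F V (k - 1), #{B ∈ S | T ≤ B}.offDiag =
      ∑ U ∈ grassmannian F V (k + 1), #{B ∈ S | B ≤ U}.offDiag := by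
  rw [sum_card_offDiag_filter_le hS, sum_card_offDiag_filter_ge hS]
  congr 1
  refine filter_congr fun ⟨B, B'⟩ hp ↦ ?_
  obtain ⟨hB, hB', hne⟩ := mem_offDiag.mp hp
  have hlt := finrank_inf_lt_of_ne ((hS B hB).trans (hS B' hB').symm) hne
  have hdim := Submodule.finrank_sup_add_finrank_inf_eq B B'
  rw [hS B hB] at hlt hdim
  rw [hS B' hB'] at hdim
  dsimp only
  omega

variable [Fintype F]

theorem card_grassmannian_one :
    #(grassmannian F V 1) = ∑ i ∈ range (finrank F V), Fintype.card F ^ i := by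
  rw [grassmannian, ← Nat.card_eq_card_finite_toFinset, Set.coe_ofPred,
    ← Nat.card_congr (Projectivization.equivSubmodule F V),
    Projectivization.card_of_finrank F V rfl, Nat.card_eq_fintype_card]

theorem card_grassmannian (d : ℕ) :
    (#(grassmannian F V d) : ℚ) = gaussBinom (Fintype.card F) (finrank F V) d := by
  induction d generalizing V with
  | zero => simp [grassmannian_zero, gaussBinom_zero_right]
  | succ d ih =>
    have hq : 1 < Fintype.card F := Fintype.one_lt_card
    have hAbove : ∀ L ∈ grassmannian F V 1,
        (#((grassmannian F V (d + 1)).bipartiteAbove (· ≤ ·) L) : ℚ) =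
          gaussBinom (Fintype.card F) (finrank F V - 1) d := by
      intro L hL
      rw [mem_grassmannian] at hL
      rw [bipartiteAbove, add_comm, ← hL, card_filter_ge_grassmannian, ih,
        Submodule.finrank_quotient]
    have hBelow : ∀ X ∈ grassmannian F V (d + 1),
        (#((grassmannian F V 1).bipartiteBelow (· ≤ ·) X) : ℚ) =
          ∑ i ∈ range (d + 1), (Fintype.card F : ℚ) ^ i := by
      intro X hX
      rw [mem_grassmannian] at hX
      rw [bipartiteBelow, card_filter_le_grassmannian, card_grassmannian_one, hX]
      push_cast
      rfl
    have hcount := congrArg (Nat.cast : ℕ → ℚ)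
      (sum_card_bipartiteAbove_eq_sum_card_bipartiteBelow (s := grassmannian F V 1)
        (t := grassmannian F V (d + 1)) (r := (· ≤ ·)))
    push_cast at hcount
    rw [sum_congr rfl hAbove, sum_congr rfl hBelow, sum_const, sum_const, nsmul_eq_mul,
      nsmul_eq_mul, card_grassmannian_one] at hcount
    push_cast at hcount
    rw [← gaussBinom_succ_mul_geom_sum hq] at hcount
    exact (mul_right_cancel₀ (geom_sum_pos (by positivity) (Nat.succ_ne_zero d)).ne' hcount).symm

theorem card_filter_le_grassmannian_eq_gaussBinom (X : Submodule F V) (j : ℕ) :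
    (#{T ∈ grassmannian F V j | T ≤ X} : ℚ) =
      gaussBinom (Fintype.card F) (finrank F X) j := by
  rw [card_filter_le_grassmannian, card_grassmannian]

theorem card_filter_ge_grassmannian_eq_gaussBinom (L : Submodule F V) (j : ℕ) :
    (#{Y ∈ grassmannian F V (finrank F L + j) | L ≤ Y} : ℚ) =
      gaussBinom (Fintype.card F) (finrank F V - finrank F L) j := by
  rw [card_filter_ge_grassmannian, card_grassmannian, Submodule.finrank_quotient]

theorem sum_card_filter_le_eq_card_mul (hS : ∀ X ∈ S, finrank F X = k) (j : ℕ) :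
    ∑ U ∈ grassmannian F V (k + j), (#{B ∈ S | B ≤ U} : ℚ) =
      #S * gaussBinom (Fintype.card F) (finrank F V - k) j := by
  have hcount := congrArg (Nat.cast : ℕ → ℚ)
    (sum_card_bipartiteAbove_eq_sum_card_bipartiteBelow (s := S)
      (t := grassmannian F V (k + j)) (r := (· ≤ ·)))
  simp only [bipartiteAbove, bipartiteBelow, Nat.cast_sum] at hcount
  rw [← hcount, ← nsmul_eq_mul, ← sum_const]
  refine sum_congr rfl fun B hB ↦ ?_
  rw [← hS B hB, card_filter_ge_grassmannian_eq_gaussBinom]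

theorem sum_card_filter_ge_eq_card_mul (hS : ∀ X ∈ S, finrank F X = k) (j : ℕ) :
    ∑ T ∈ grassmannian F V j, (#{B ∈ S | T ≤ B} : ℚ) =
      #S * gaussBinom (Fintype.card F) k j := by
  have hcount := congrArg (Nat.cast : ℕ → ℚ)
    (sum_card_bipartiteAbove_eq_sum_card_bipartiteBelow (s := S)
      (t := grassmannian F V j) (r := fun B T ↦ T ≤ B))
  simp only [bipartiteAbove, bipartiteBelow, Nat.cast_sum] at hcount
  rw [← hcount, ← nsmul_eq_mul, ← sum_const]
  refine sum_congr rfl fun B hB ↦ ?_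
  rw [card_filter_le_grassmannian_eq_gaussBinom, hS B hB]

theorem card_filter_ge_le_geom_sum {T : Submodule F V}
    (hS : ∀ X ∈ S, finrank F X = finrank F T + 1) :
    (#{B ∈ S | T ≤ B} : ℚ) ≤
      ∑ i ∈ range (finrank F V - finrank F T), (Fintype.card F : ℚ) ^ i := by
  have hsub : {B ∈ S | T ≤ B} ⊆ {Y ∈ grassmannian F V (finrank F T + 1) | T ≤ Y} :=
    fun B hB ↦ by
      rw [mem_filter] at hB ⊢
      exact ⟨mem_grassmannian.mpr (hS B hB.1), hB.2⟩
  rw [← gaussBinom_one_right Fintype.one_lt_card, ← card_filter_ge_grassmannian_eq_gaussBinom]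
  exact_mod_cast card_le_card hsub

end Grassmannian

section Covering

open scoped Classical

variable {F V : Type*} [Field F] [AddCommGroup V] [Module F V]

def IsCovering (S : Finset (Submodule F V)) (k r : ℕ) : Prop :=
  (∀ X ∈ S, finrank F X = k) ∧ ∀ Y : Submodule F V, finrank F Y = r → ∃ X ∈ S, Y ≤ X

theorem IsCovering.one_le_card_filter_ge {S : Finset (Submodule F V)} {k r : ℕ}
    (hS : IsCovering S k r) {T : Submodule F V} (hT : finrank F T = r) :
    1 ≤ #{B ∈ S | T ≤ B} := by
  obtain ⟨X, hXS, hTX⟩ := hS.2 T hT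
  exact card_pos.mpr ⟨X, mem_filter.mpr ⟨hXS, hTX⟩⟩

variable [Fintype F] [Finite V]

theorem isCovering_grassmannian {k r : ℕ} (hrk : r ≤ k) (hk : k ≤ finrank F V) :
    IsCovering (grassmannian F V k) k r := by
  refine ⟨fun X hX ↦ mem_grassmannian.mp hX, fun Y hY ↦ ?_⟩
  obtain ⟨j, rfl⟩ : ∃ j, k = r + j := ⟨k - r, by omega⟩
  have hpos := gaussBinom_pos (Fintype.one_lt_card (α := F))
    (by omega : j ≤ finrank F V - finrank F Y)
  rw [← card_filter_ge_grassmannian_eq_gaussBinom, hY, Nat.cast_pos, card_pos] at hpos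
  obtain ⟨X, hX⟩ := hpos
  exact ⟨X, (mem_filter.mp hX).1, (mem_filter.mp hX).2⟩

variable {S : Finset (Submodule F V)} {k : ℕ}

theorem IsCovering.gaussBinom_mul_geom_sum_le (hS : IsCovering S k (k - 1)) (hk : 1 ≤ k)
    (hkn : k < finrank F V) :
    gaussBinom (Fintype.card F) (finrank F V) (k + 1) *
        ∑ i ∈ range k, (Fintype.card F : ℚ) ^ i ≤
      #S * (∑ i ∈ range (finrank F V - k), (Fintype.card F : ℚ) ^ i) ^ 2 := by
  have hq : 1 < Fintype.card F := Fintype.one_lt_card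
  have hpairs : ∑ T ∈ grassmannian F V (k - 1),
        (#{B ∈ S | T ≤ B} : ℚ) * (#{B ∈ S | T ≤ B} - 1) =
      ∑ U ∈ grassmannian F V (k + 1),
        (#{B ∈ S | B ≤ U} : ℚ) * (#{B ∈ S | B ≤ U} - 1) := by
    simp only [← natCast_card_offDiag]
    exact_mod_cast sum_card_offDiag_filter_le_eq_sum_card_offDiag_filter_ge hS.1
  have hdeg : ∀ T ∈ grassmannian F V (k - 1), 1 ≤ (#{B ∈ S | T ≤ B} : ℚ) ∧
      (#{B ∈ S | T ≤ B} : ℚ) ≤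
        ∑ i ∈ range (finrank F V - k + 1), (Fintype.card F : ℚ) ^ i := by
    intro T hT
    rw [mem_grassmannian] at hT
    refine ⟨Nat.one_le_cast.mpr (hS.one_le_card_filter_ge hT), ?_⟩
    convert card_filter_ge_le_geom_sum (T := T) fun X hX ↦ (hS.1 X hX).trans (by omega) using 3
    omega
  have hmoment := sq_sum_le_of_sum_mul_sub_one_eq hpairs hdeg
  rw [sum_card_filter_le_eq_card_mul hS.1 1, sum_card_filter_ge_eq_card_mul hS.1,
    card_grassmannian, card_grassmannian, gaussBinom_one_right hq,
    gaussBinom_sub_one_right hq hk] at hmoment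
  refine le_mul_sq_of_sq_le ?_ (by positivity) ?_ (gaussBinom_pos hq (by omega)).le hmoment
    (gaussBinom_sub_one_mul_geom_sum_mul_geom_sum hq hk hkn.le)
    (geom_sum_succ_mul_add_comm _ _ _)
  · simpa using single_le_sum (f := fun i ↦ (Fintype.card F : ℚ) ^ i)
      (fun i _ ↦ by positivity) (mem_range.mpr (by omega : 0 < finrank F V - k))
  · exact sum_le_sum_of_subset_of_nonneg (range_subset_range.mpr k.le_succ)
      fun i _ _ ↦ by positivity

theorem IsCovering.le_card (hS : IsCovering S k (k - 1)) (hk : 1 ≤ k) (hkn : k < finrank F V) :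
    ((Fintype.card F : ℚ) ^ k - 1) * ((Fintype.card F : ℚ) - 1) /
        ((Fintype.card F : ℚ) ^ (finrank F V - k) - 1) ^ 2 *
      gaussBinom (Fintype.card F) (finrank F V) (k + 1) ≤ #S := by
  have hq1 : (Fintype.card F : ℚ) - 1 ≠ 0 :=
    sub_ne_zero.mpr (by exact_mod_cast (Fintype.one_lt_card (α := F)).ne')
  have hA : 0 < ∑ i ∈ range (finrank F V - k), (Fintype.card F : ℚ) ^ i :=
    geom_sum_pos (by positivity) (by omega)
  rw [← geom_sum_mul, ← geom_sum_mul, mul_pow, mul_assoc, ← sq,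
    mul_div_mul_right _ _ (pow_ne_zero 2 hq1), div_mul_eq_mul_div, div_le_iff₀ (by positivity),
    mul_comm]
  exact hS.gaussBinom_mul_geom_sum_le hk hkn

end Covering

theorem coveringNumber_eq_sInf (F : Type) [Field F] (n k r : ℕ) :
    coveringNumber F n k r =
      sInf {m | ∃ S : Finset (Submodule F (Fin n → F)), #S = m ∧ IsCovering S k r} :=
  rfl

theorem le_coveringNumber {F : Type} [Field F] {n k r : ℕ} {b : ℚ}
    (hex : ∃ S : Finset (Submodule F (Fin n → F)), IsCovering S k r)
    (h : ∀ S : Finset (Submodule F (Fin n → F)), IsCovering S k r → b ≤ #S) :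
    b ≤ coveringNumber F n k r := by
  obtain ⟨S, hS⟩ := hex
  obtain ⟨T, hT, hTcov⟩ := Nat.sInf_mem (s := {m | ∃ S : Finset (Submodule F (Fin n → F)),
    #S = m ∧ IsCovering S k r}) ⟨#S, S, rfl, hS⟩
  rw [coveringNumber_eq_sInf, ← hT]
  exact h T hTcov

theorem deCaen_bound_general (q n k : ℕ)
    (hk : 2 ≤ k) (hkn : k ≤ n - 1)
    (F : Type) [Field F] [Fintype F] (hF : Fintype.card F = q) :
    (coveringNumber F n k (k - 1) : ℚ) ≥
      (((q : ℚ) ^ k - 1) * ((q : ℚ) - 1) / ((q : ℚ) ^ (n - k) - 1) ^ 2) *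
        gaussBinom q n (k + 1) := by
  subst hF
  have hkn' : k < finrank F (Fin n → F) := by
    rw [finrank_fin_fun]
    omega
  refine le_coveringNumber ⟨_, isCovering_grassmannian (k.sub_le 1) hkn'.le⟩ fun S hS ↦ ?_
  simpa only [finrank_fin_fun] using hS.le_card (by omega) hkn'

/-- The q-analog of de Caen's bound. -/
theorem deCaen_bound (q n k : ℕ) (hq : IsPrimePow q)
    (hk : 2 ≤ k) (hkn : k ≤ n - 1)
    (F : Type) [Field F] [Fintype F] (hF : Fintype.card F = q) :
    (coveringNumber F n k (k - 1) : ℚ) ≥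
      (((q : ℚ) ^ k - 1) * ((q : ℚ) - 1) / ((q : ℚ) ^ (n - k) - 1) ^ 2) *
        gaussBinom q n (k + 1) :=
  deCaen_bound_general q n k hk hkn F hF
end

section
/- Let q be a prime power and let 1 ≤ k ≤ n be integers. Then 𝒞_q(n,k,1) = ⌈ (q^n−1)/(q^k−1) ⌉. -/
/-!
Each `k`-dimensional subspace contains `q ^ k - 1` of the `q ^ n - 1` nonzero vectors, which gives
the lower bound. For the matching construction write `n = k + m` with `m > 0` and let `E` be the
extension of `F` of degree `m`. For a `k`-dimensional `A` and an `F`-linear `π : A → E`, the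
graphs of `a ↦ α * π a`, `α ∈ E`, are `q ^ m` subspaces of `A × E` of dimension `k` that cover
every `(a, w)` with `π a ≠ 0`. If `m ≤ k`, take `π` surjective: the remaining points all lie in the
`k`-dimensional `ker (π ∘ fst)`. If `m ≥ k`, take `π` injective: the remaining points are the
`(0, w)`, covered recursively inside `E`. Both give `q ^ m + ⌈(q ^ m - 1) / (q ^ k - 1)⌉`
subspaces, which is `⌈(q ^ n - 1) / (q ^ k - 1)⌉`.
-/

open Module

open Finset

section PointCover

variable {F V W : Type*} [Field F] [AddCommGroup V] [Module F V] [AddCommGroup W] [Module F W]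

def IsPointCover (k : ℕ) (S : Finset (Submodule F V)) : Prop :=
  (∀ X ∈ S, finrank F X = k) ∧ ∀ v : V, v ≠ 0 → ∃ X ∈ S, v ∈ X

theorem forall_finrank_eq_one_exists_le_iff {S : Finset (Submodule F V)} :
    (∀ Y : Submodule F V, finrank F Y = 1 → ∃ X ∈ S, Y ≤ X) ↔
      ∀ v : V, v ≠ 0 → ∃ X ∈ S, v ∈ X := by
  refine ⟨fun h v hv => ?_, fun h Y hY => ?_⟩
  · obtain ⟨X, hX, hle⟩ := h (F ∙ v) (finrank_span_singleton hv)
    exact ⟨X, hX, hle (Submodule.mem_span_singleton_self v)⟩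
  · obtain ⟨v, hv, hspan⟩ := finrank_eq_one_iff'.mp hY
    obtain ⟨X, hX, hvX⟩ := h v (by simpa using hv)
    refine ⟨X, hX, fun w hw => ?_⟩
    obtain ⟨c, hc⟩ := hspan ⟨w, hw⟩
    have hcw : c • (v : V) = w := congrArg Subtype.val hc
    exact hcw ▸ X.smul_mem c hvX

theorem isPointCover_singleton_top {k : ℕ} (h : finrank F V = k) :
    IsPointCover k ({⊤} : Finset (Submodule F V)) :=
  ⟨by simpa using h, fun _ _ => ⟨⊤, mem_singleton_self _, Submodule.mem_top⟩⟩

theorem IsPointCover.exists_of_linearEquiv {k : ℕ} {S : Finset (Submodule F V)}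
    (hS : IsPointCover k S) (e : V ≃ₗ[F] W) :
    ∃ T : Finset (Submodule F W), IsPointCover k T ∧ #T ≤ #S := by
  classical
  refine ⟨S.image (Submodule.map (e : V →ₗ[F] W)), ⟨?_, fun w hw => ?_⟩, card_image_le⟩
  · simp only [mem_image, forall_exists_index, and_imp, forall_apply_eq_imp_iff₂]
    intro X hX
    rw [LinearEquiv.finrank_map_eq, hS.1 X hX]
  · obtain ⟨X, hX, hvX⟩ := hS.2 (e.symm w) (by simpa using hw)
    exact ⟨_, mem_image_of_mem _ hX, ⟨e.symm w, hvX, e.apply_symm_apply w⟩⟩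

theorem IsPointCover.card_sub_one_le [Fintype F] [Fintype V] {k : ℕ}
    {S : Finset (Submodule F V)} (hS : IsPointCover k S) :
    Fintype.card V - 1 ≤ #S * (Fintype.card F ^ k - 1) := by
  classical
  calc Fintype.card V - 1 = #(univ.erase (0 : V)) := by simp [card_erase_of_mem]
    _ ≤ #(S.biUnion fun X => (X : Set V).toFinset.erase 0) := by
        refine card_le_card fun v hv => ?_
        obtain ⟨X, hX, hvX⟩ := hS.2 v (ne_of_mem_erase hv)
        exact mem_biUnion.mpr ⟨X, hX, by simpa [ne_of_mem_erase hv] using hvX⟩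
    _ ≤ ∑ X ∈ S, #((X : Set V).toFinset.erase 0) := card_biUnion_le
    _ = ∑ _X ∈ S, (Fintype.card F ^ k - 1) := by
        refine sum_congr rfl fun X hX => ?_
        rw [card_erase_of_mem (by simp), Set.toFinset_card, ← Nat.card_eq_fintype_card,
          SetLike.coe_sort_coe, natCard_eq_pow_finrank (K := F), hS.1 X hX,
          Nat.card_eq_fintype_card]
    _ = #S * (Fintype.card F ^ k - 1) := by rw [sum_const, smul_eq_mul]

theorem IsPointCover.ceil_le_card [Fintype F] [Fintype V] {k : ℕ} (hk : k ≠ 0)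
    {S : Finset (Submodule F V)} (hS : IsPointCover k S) :
    ⌈((Fintype.card F : ℚ) ^ finrank F V - 1) / ((Fintype.card F : ℚ) ^ k - 1)⌉ ≤ #S := by
  have hq : 1 < Fintype.card F := Fintype.one_lt_card
  have hqk : 1 < Fintype.card F ^ k := Nat.one_lt_pow hk hq
  have hqn : 1 ≤ Fintype.card F ^ finrank F V := Nat.one_le_pow _ _ (by omega)
  have hcount : ((Fintype.card F ^ finrank F V - 1 : ℕ) : ℚ) ≤
      ((#S * (Fintype.card F ^ k - 1) : ℕ) : ℚ) := by
    rw [← card_eq_pow_finrank]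
    exact_mod_cast hS.card_sub_one_le
  push_cast [Nat.cast_sub hqn, Nat.cast_sub hqk.le] at hcount
  have hqk' : (1 : ℚ) < (Fintype.card F : ℚ) ^ k := by exact_mod_cast hqk
  rw [Int.ceil_le, div_le_iff₀ (by linarith)]
  exact_mod_cast hcount

end PointCover

section GraphCover

variable {F A E : Type*} [Field F] [AddCommGroup A] [Module F A] [Field E] [Algebra F E]
  [Fintype E] {k : ℕ}

theorem isPointCover_union_image_graph [DecidableEq (Submodule F (A × E))] (π : A →ₗ[F] E)
    (hA : finrank F A = k) {S₀ : Finset (Submodule F (A × E))}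
    (hS₀dim : ∀ X ∈ S₀, finrank F X = k)
    (hS₀ : ∀ v : A × E, v ≠ 0 → π v.1 = 0 → ∃ X ∈ S₀, v ∈ X) :
    IsPointCover k (S₀ ∪ univ.image fun α : E => (α • π).graph) := by
  refine ⟨fun X hX => ?_, fun ⟨a, w⟩ hv => ?_⟩
  · rcases mem_union.mp hX with hX | hX
    · exact hS₀dim X hX
    · obtain ⟨α, -, rfl⟩ := mem_image.mp hX
      rw [LinearMap.graph_eq_range_prod, LinearMap.finrank_range_of_inj, hA]
      exact fun x y h => congrArg Prod.fst h
  · by_cases ha : π a = 0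
    · obtain ⟨X, hX, hvX⟩ := hS₀ _ hv ha
      exact ⟨X, mem_union_left _ hX, hvX⟩
    · refine ⟨((w * (π a)⁻¹) • π).graph, mem_union_right _ (mem_image_of_mem _ (mem_univ _)), ?_⟩
      simp [ha]

theorem exists_isPointCover_prod_of_surjective [FiniteDimensional F A] (π : A →ₗ[F] E)
    (hπ : Function.Surjective π) (hA : finrank F A = k) :
    ∃ S : Finset (Submodule F (A × E)), IsPointCover k S ∧ #S ≤ 1 + Fintype.card E := by
  classical
  have : FiniteDimensional F E := .of_finite
  have hK : finrank F (LinearMap.ker (π ∘ₗ LinearMap.fst F A E)) = k := by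
    have hrange : LinearMap.range (π ∘ₗ LinearMap.fst F A E) = ⊤ :=
      LinearMap.range_eq_top.mpr (hπ.comp Prod.fst_surjective)
    have := (π ∘ₗ LinearMap.fst F A E).finrank_range_add_finrank_ker
    rw [hrange, finrank_top, finrank_prod, hA] at this
    omega
  refine ⟨_, isPointCover_union_image_graph π hA
    (S₀ := {LinearMap.ker (π ∘ₗ LinearMap.fst F A E)}) (by simpa using hK)
    (fun v _ hv => ⟨_, mem_singleton_self _, hv⟩), ?_⟩
  exact (card_union_le _ _).trans (add_le_add (by simp) (card_image_le.trans_eq card_univ))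

theorem exists_isPointCover_prod_of_injective (π : A →ₗ[F] E) (hπ : Function.Injective π)
    (hA : finrank F A = k) {T : Finset (Submodule F E)} (hT : IsPointCover k T) :
    ∃ S : Finset (Submodule F (A × E)), IsPointCover k S ∧ #S ≤ #T + Fintype.card E := by
  classical
  let inr := LinearMap.inr F A E
  have hdim : ∀ X ∈ T.image (Submodule.map inr), finrank F X = k := by
    simp only [mem_image, forall_exists_index, and_imp, forall_apply_eq_imp_iff₂]
    intro X hX
    rw [← (Submodule.equivMapOfInjective _ LinearMap.inr_injective X).finrank_eq, hT.1 X hX]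
  have hcov : ∀ v : A × E, v ≠ 0 → π v.1 = 0 → ∃ X ∈ T.image (Submodule.map inr), v ∈ X := by
    rintro ⟨a, w⟩ hv ha
    obtain rfl : a = 0 := hπ (by simpa using ha)
    obtain ⟨X, hX, hwX⟩ := hT.2 w (by simpa using hv)
    exact ⟨_, mem_image_of_mem _ hX, ⟨w, hwX, rfl⟩⟩
  refine ⟨_, isPointCover_union_image_graph π hA hdim hcov, ?_⟩
  exact (card_union_le _ _).trans (add_le_add card_image_le (card_image_le.trans_eq card_univ))

end GraphCover

section Extension

variable {F V E : Type*} [Field F] [AddCommGroup V] [Module F V] [Field E] [Algebra F E]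
  [Fintype E] {k : ℕ}

theorem exists_isPointCover_of_finrank_extension_le (hE : finrank F E ≤ k)
    (hV : finrank F V = k + finrank F E) :
    ∃ S : Finset (Submodule F V), IsPointCover k S ∧ #S ≤ 1 + Fintype.card E := by
  have : FiniteDimensional F E := .of_finite
  let C := Fin (k - finrank F E) → F
  obtain ⟨S, hS, hScard⟩ := exists_isPointCover_prod_of_surjective (A := E × C) (k := k)
    (LinearMap.fst F E C) Prod.fst_surjective (by simp [C]; omega)
  have : FiniteDimensional F V :=
    Module.finite_of_finrank_pos (hV ▸ Nat.add_pos_right k finrank_pos)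
  obtain ⟨T, hT, hTcard⟩ := hS.exists_of_linearEquiv
    (LinearEquiv.ofFinrankEq _ V (by simp [C, hV]; omega))
  exact ⟨T, hT, hTcard.trans hScard⟩

theorem exists_isPointCover_of_le_finrank_extension (hE : k ≤ finrank F E)
    (hV : finrank F V = k + finrank F E) {T : Finset (Submodule F E)} (hT : IsPointCover k T) :
    ∃ S : Finset (Submodule F V), IsPointCover k S ∧ #S ≤ #T + Fintype.card E := by
  have : FiniteDimensional F E := .of_finite
  obtain ⟨b, hb⟩ := exists_linearIndependent_of_le_finrank hE
  let A := Submodule.span F (Set.range b)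
  have hA : finrank F A = k := by simp [A, finrank_span_eq_card hb]
  obtain ⟨S, hS, hScard⟩ := exists_isPointCover_prod_of_injective A.subtype
    A.injective_subtype hA hT
  have : FiniteDimensional F V :=
    Module.finite_of_finrank_pos (hV ▸ Nat.add_pos_right k finrank_pos)
  obtain ⟨S', hS', hS'card⟩ := hS.exists_of_linearEquiv
    (LinearEquiv.ofFinrankEq _ V (by simp [hA, hV]))
  exact ⟨S', hS', hS'card.trans hScard⟩

end Extension

section Ceil

variable {q k : ℕ}

theorem ceil_pow_add_sub_one_div (h : (q : ℚ) ^ k ≠ 1) (m : ℕ) :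
    ⌈((q : ℚ) ^ (k + m) - 1) / ((q : ℚ) ^ k - 1)⌉ =
      q ^ m + ⌈((q : ℚ) ^ m - 1) / ((q : ℚ) ^ k - 1)⌉ := by
  have h' : (q : ℚ) ^ k - 1 ≠ 0 := sub_ne_zero.mpr h
  have hsplit : ((q : ℚ) ^ (k + m) - 1) / ((q : ℚ) ^ k - 1) =
      ((q : ℚ) ^ m - 1) / ((q : ℚ) ^ k - 1) + ((q ^ m : ℕ) : ℤ) := by
    field_simp
    push_cast
    ring
  rw [hsplit, Int.ceil_add_intCast]
  push_cast
  ring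

theorem ceil_pow_sub_one_div_eq_one (hq : 1 < q) {m : ℕ} (hm : 0 < m) (hmk : m ≤ k) :
    ⌈((q : ℚ) ^ m - 1) / ((q : ℚ) ^ k - 1)⌉ = 1 := by
  have hq' : (1 : ℚ) < q := by exact_mod_cast hq
  have hqm : 1 < (q : ℚ) ^ m := one_lt_pow₀ hq' hm.ne'
  have hqk : (q : ℚ) ^ m ≤ (q : ℚ) ^ k := pow_le_pow_right₀ hq'.le hmk
  rw [Int.ceil_eq_iff, div_le_iff₀ (by linarith), lt_div_iff₀ (by linarith)]
  constructor <;> push_cast <;> linarith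

end Ceil

theorem exists_isPointCover_card_le_ceil (F : Type) [Field F] [Fintype F] {k : ℕ} (hk : k ≠ 0)
    (m : ℕ) {V : Type} [AddCommGroup V] [Module F V] (hV : finrank F V = k + m) :
    ∃ S : Finset (Submodule F V), IsPointCover k S ∧
      (#S : ℤ) ≤ ⌈((Fintype.card F : ℚ) ^ (k + m) - 1) / ((Fintype.card F : ℚ) ^ k - 1)⌉ := by
  set q := Fintype.card F
  have hq : 1 < q := Fintype.one_lt_card
  induction m using Nat.strong_induction_on generalizing V with | _ m ih =>
  rcases Nat.eq_zero_or_pos m with rfl | hm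
  · refine ⟨{⊤}, isPointCover_singleton_top hV, ?_⟩
    rw [add_zero, ceil_pow_sub_one_div_eq_one hq (Nat.pos_of_ne_zero hk) le_rfl]
    simp
  obtain ⟨p, _⟩ := CharP.exists F
  have : Fact p.Prime := ⟨CharP.char_is_prime F p⟩
  have : NeZero m := ⟨hm.ne'⟩
  let E := FiniteField.Extension F p m
  have : Fintype E := .ofFinite E
  have hEdim : finrank F E = m := FiniteField.finrank_extension F p m
  have hEcard : Fintype.card E = q ^ m := by
    rw [Fintype.card_eq_nat_card, FiniteField.natCard_extension, Nat.card_eq_fintype_card]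
  rw [ceil_pow_add_sub_one_div (by exact_mod_cast (Nat.one_lt_pow hk hq).ne') m]
  rcases le_or_gt m k with hmk | hkm
  · obtain ⟨S, hS, hScard⟩ := exists_isPointCover_of_finrank_extension_le (F := F) (E := E)
      (k := k) (by omega) (by rw [hV, hEdim])
    rw [hEcard] at hScard
    zify at hScard
    refine ⟨S, hS, ?_⟩
    rw [ceil_pow_sub_one_div_eq_one hq hm hmk]
    omega
  · obtain ⟨T, hT, hTcard⟩ := ih (m - k) (by omega) (V := E) (by omega)
    obtain ⟨S, hS, hScard⟩ :=
      exists_isPointCover_of_le_finrank_extension (by omega) (by rw [hV, hEdim]) hT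
    rw [Nat.add_sub_cancel' hkm.le] at hTcard
    rw [hEcard] at hScard
    zify at hScard
    exact ⟨S, hS, by omega⟩

theorem covering_points_general (q n k : ℕ)
    (hk : 1 ≤ k) (hkn : k ≤ n)
    (F : Type) [Field F] [Fintype F] (hF : Fintype.card F = q) :
    (coveringNumber F n k 1 : ℤ) = ⌈((q : ℚ) ^ n - 1) / ((q : ℚ) ^ k - 1)⌉ := by
  subst hF
  have hfin : finrank F (Fin n → F) = n := finrank_fin_fun F
  obtain ⟨S, hS, hScard⟩ :=
    exists_isPointCover_card_le_ceil F (k := k) (by omega) (n - k) (by rw [hfin]; omega)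
  rw [Nat.add_sub_cancel' hkn] at hScard
  have hSmem : #S ∈ {m : ℕ | ∃ S : Finset (Submodule F (Fin n → F)), #S = m ∧
      (∀ X ∈ S, finrank F X = k) ∧
      ∀ Y : Submodule F (Fin n → F), finrank F Y = 1 → ∃ X ∈ S, Y ≤ X} :=
    ⟨S, rfl, hS.1, forall_finrank_eq_one_exists_le_iff.mpr hS.2⟩
  apply le_antisymm
  · exact (Nat.cast_le.mpr (Nat.sInf_le hSmem)).trans hScard
  · obtain ⟨T, hT, hTdim, hTcov⟩ := Nat.sInf_mem ⟨_, hSmem⟩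
    have hTbound :=
      IsPointCover.ceil_le_card (by omega) ⟨hTdim, forall_finrank_eq_one_exists_le_iff.mp hTcov⟩
    rwa [hfin, hT] at hTbound

/-- Exact value of $\mathcal{C}_q(n,k,1)$. -/
theorem covering_points (q n k : ℕ) (hq : IsPrimePow q)
    (hk : 1 ≤ k) (hkn : k ≤ n)
    (F : Type) [Field F] [Fintype F] (hF : Fintype.card F = q) :
    (coveringNumber F n k 1 : ℤ) = ⌈((q : ℚ) ^ n - 1) / ((q : ℚ) ^ k - 1)⌉ :=
  covering_points_general q n k hk hkn F hF
end

section
/- Let q be a prime power and let 1 ≤ r ≤ n−1 be integers. Then 𝒞_q(n, n−1, r) = (q^{r+1}−1)/(q−1). -/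
open Module

/-!
Fix a projection `π : F^n → F^(r+1)`. The preimages of the `(q^(r+1) - 1)/(q - 1)` hyperplanes
of `F^(r+1)` are hyperplanes of `F^n`, and they cover every `r`-space `Y`, because `π Y` is a
proper subspace and hence lies in some hyperplane.

Conversely, let fewer hyperplanes be given and descend from `F^n`: if `W` has dimension `d > r`
and lies in none of them, each given hyperplane contains at most one hyperplane of `W` (two
distinct ones span `W`), while `W` has `(q^d - 1)/(q - 1)` hyperplanes. So some hyperplane of `W`
again lies in none of them, and after `n - r` steps we reach an uncovered `r`-space.
-/

open Module Finset
open scoped LinearAlgebra.Projectivization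

namespace Projectivization

variable {F V : Type*} [Field F] [AddCommGroup V] [Module F V]

noncomputable def hyperplane (H : ℙ F (Dual F V)) : Submodule F V :=
  LinearMap.ker H.rep

lemma hyperplane_mk (f : Dual F V) (hf : f ≠ 0) :
    hyperplane (mk F f hf) = LinearMap.ker f := by
  obtain ⟨a, ha⟩ := exists_smul_eq_mk_rep F f hf
  rw [hyperplane, ← ha, Units.smul_def, LinearMap.ker_smul _ _ a.ne_zero]

lemma hyperplane_injective :
    Function.Injective (hyperplane : ℙ F (Dual F V) → Submodule F V) := by
  intro H₁ H₂ h
  have hle : ⨅ _ : Unit, LinearMap.ker H₂.rep ≤ LinearMap.ker H₁.rep := by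
    simpa [hyperplane] using h.ge
  obtain ⟨a, ha⟩ :=
    Submodule.mem_span_singleton.mp (by simpa using mem_span_of_iInf_ker_le_ker hle)
  rw [← mk_rep H₁, ← mk_rep H₂, mk_eq_mk_iff']
  exact ⟨a, ha⟩

lemma isCoatom_hyperplane (H : ℙ F (Dual F V)) : IsCoatom (hyperplane H) :=
  LinearMap.isCoatom_ker_of_surjective (LinearMap.surjective_of_ne_zero H.rep_nonzero)

lemma finrank_hyperplane_add_one [FiniteDimensional F V] (H : ℙ F (Dual F V)) :
    finrank F (hyperplane H) + 1 = finrank F V :=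
  Dual.finrank_ker_add_one_of_ne_zero H.rep_nonzero

lemma exists_le_hyperplane {U : Submodule F V} (hU : U ≠ ⊤) :
    ∃ H : ℙ F (Dual F V), U ≤ hyperplane H := by
  obtain ⟨f, hf, hUf⟩ := U.exists_le_ker_of_lt_top hU.lt_top
  exact ⟨mk F f hf, (hyperplane_mk f hf).ge.trans' hUf⟩

instance [Finite F] [FiniteDimensional F V] : Finite (ℙ F (Dual F V)) :=
  have := Module.finite_of_finite F (M := Dual F V)
  inferInstance

lemma card_dual [Finite F] [FiniteDimensional F V] :
    Nat.card (ℙ F (Dual F V)) = ∑ i ∈ range (finrank F V), Nat.card F ^ i :=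
  card_of_finrank F _ Subspace.dual_finrank_eq

end Projectivization

open Projectivization

section Descent

variable {F V : Type*} [Field F] [AddCommGroup V] [Module F V]

lemma exists_hyperplane_not_le_comap {W : Submodule F V} {S : Finset (Submodule F V)}
    [Finite F] [FiniteDimensional F W] (hW : ∀ X ∈ S, ¬ W ≤ X)
    (hS : #S < Nat.card (ℙ F (Dual F W))) :
    ∃ H : ℙ F (Dual F W), ∀ X ∈ S, ¬ hyperplane H ≤ X.comap W.subtype := by
  by_contra! hbad
  choose X hXS hX using hbad
  -- Two distinct hyperplanes of `W` span `W`, so no `X ∈ S` can contain both.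
  have hinj : Function.Injective fun H => (⟨X H, hXS H⟩ : S) := by
    intro H₁ H₂ h
    by_contra hne
    have hsup := (isCoatom_hyperplane H₁).sup_eq_top_of_ne (isCoatom_hyperplane H₂)
      (hyperplane_injective.ne hne)
    refine hW (X H₁) (hXS H₁) (Submodule.comap_subtype_eq_top.mp (top_le_iff.mp ?_))
    have hX₁₂ : X H₁ = X H₂ := congrArg Subtype.val h
    rw [← hsup]
    exact sup_le (hX H₁) (hX₁₂ ▸ hX H₂)
  have := Nat.card_le_card_of_injective _ hinj
  rw [Nat.card_eq_fintype_card (α := S), Fintype.card_coe] at this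
  omega

variable [Finite F] [FiniteDimensional F V]

lemma exists_finrank_eq_forall_not_le {S : Finset (Submodule F V)} (hS : ∀ X ∈ S, X ≠ ⊤)
    {r : ℕ} (hr : r < finrank F V) (hcard : #S < ∑ i ∈ range (r + 1), Nat.card F ^ i) :
    ∃ Y : Submodule F V, finrank F Y = r ∧ ∀ X ∈ S, ¬ Y ≤ X := by
  suffices h : ∀ k, k + r ≤ finrank F V →
      ∃ Y : Submodule F V, finrank F Y + k = finrank F V ∧ ∀ X ∈ S, ¬ Y ≤ X by
    obtain ⟨Y, hY, hYS⟩ := h (finrank F V - r) (by omega)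
    exact ⟨Y, by omega, hYS⟩
  intro k
  induction k with
  | zero => exact fun _ => ⟨⊤, by simp, fun X hX h => hS X hX (top_le_iff.mp h)⟩
  | succ k ih =>
    intro hk
    obtain ⟨Y, hY, hYS⟩ := ih (by omega)
    have hcardY : #S < Nat.card (ℙ F (Dual F Y)) := by
      rw [card_dual]
      exact hcard.trans_le (sum_le_sum_of_subset (range_subset_range.mpr (by omega)))
    obtain ⟨H, hH⟩ := exists_hyperplane_not_le_comap hYS hcardY
    refine ⟨(hyperplane H).map Y.subtype, ?_,
      fun X hX h => hH X hX (Submodule.map_le_iff_le_comap.mp h)⟩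
    have := finrank_hyperplane_add_one H
    rw [Submodule.finrank_map_subtype_eq]
    omega

end Descent

section Cover

variable {F V V' : Type*} [Field F] [AddCommGroup V] [Module F V]
  [AddCommGroup V'] [Module F V']

lemma exists_le_comap_hyperplane [FiniteDimensional F V'] (π : V →ₗ[F] V') {Y : Submodule F V}
    [FiniteDimensional F Y] (hY : finrank F Y < finrank F V') :
    ∃ H : ℙ F (Dual F V'), Y ≤ (hyperplane H).comap π := by
  have hne : Y.map π ≠ ⊤ := by
    intro h
    have := Submodule.finrank_map_le π Y
    rw [h, finrank_top] at this
    omega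
  obtain ⟨H, hH⟩ := exists_le_hyperplane hne
  exact ⟨H, Submodule.map_le_iff_le_comap.mp hH⟩

lemma finrank_comap_hyperplane_add_one [FiniteDimensional F V] {π : V →ₗ[F] V'}
    (hπ : Function.Surjective π) (H : ℙ F (Dual F V')) :
    finrank F ((hyperplane H).comap π) + 1 = finrank F V := by
  have hne : H.rep.comp π ≠ 0 := by
    rw [← LinearMap.zero_comp π, Ne, LinearMap.cancel_right hπ]
    exact H.rep_nonzero
  rw [hyperplane, ← LinearMap.ker_comp]
  exact Dual.finrank_ker_add_one_of_ne_zero hne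

variable [Finite F]

lemma exists_hyperplane_cover {n r : ℕ} (hrn : r < n) :
    ∃ S : Finset (Submodule F (Fin n → F)), #S = ∑ i ∈ range (r + 1), Nat.card F ^ i ∧
      (∀ X ∈ S, finrank F X = n - 1) ∧
      ∀ Y : Submodule F (Fin n → F), finrank F Y = r → ∃ X ∈ S, Y ≤ X := by
  classical
  let π : (Fin n → F) →ₗ[F] (Fin (r + 1) → F) := LinearMap.funLeft F F (Fin.castLE hrn)
  have hπ : Function.Surjective π :=
    LinearMap.funLeft_surjective_of_injective _ _ _ (Fin.castLE_injective hrn)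
  have := Fintype.ofFinite (ℙ F (Dual F (Fin (r + 1) → F)))
  have hinj :
      Function.Injective fun H : ℙ F (Dual F (Fin (r + 1) → F)) => (hyperplane H).comap π :=
    (Submodule.comap_injective_of_surjective hπ).comp hyperplane_injective
  refine ⟨univ.image fun H => (hyperplane H).comap π, ?_, ?_, ?_⟩
  · rw [card_image_of_injective _ hinj, card_univ, ← Nat.card_eq_fintype_card, card_dual,
      finrank_fin_fun]
  · simp only [mem_image, mem_univ, true_and, forall_exists_index, forall_apply_eq_imp_iff]
    intro H
    have := finrank_comap_hyperplane_add_one hπ H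
    rw [finrank_fin_fun] at this
    omega
  · intro Y hY
    obtain ⟨H, hH⟩ := exists_le_comap_hyperplane π (Y := Y) (by simp [hY])
    exact ⟨_, mem_image_of_mem _ (mem_univ H), hH⟩

end Cover

theorem covering_hyperplanes_general (q n r : ℕ)
    (hr : 1 ≤ r) (hrn : r ≤ n - 1)
    (F : Type) [Field F] [Fintype F] (hF : Fintype.card F = q) :
    (coveringNumber F n (n - 1) r : ℚ) = ((q : ℚ) ^ (r + 1) - 1) / ((q : ℚ) - 1) := by
  have hrn' : r < n := by omega
  rw [← hF, ← Nat.card_eq_fintype_card]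
  have hleast : IsLeast { m : ℕ | ∃ S : Finset (Submodule F (Fin n → F)), #S = m ∧
      (∀ X ∈ S, finrank F X = n - 1) ∧
      ∀ Y : Submodule F (Fin n → F), finrank F Y = r → ∃ X ∈ S, Y ≤ X }
      (∑ i ∈ range (r + 1), Nat.card F ^ i) := by
    refine ⟨exists_hyperplane_cover hrn', ?_⟩
    rintro _ ⟨S, rfl, hSrank, hScov⟩
    by_contra! hlt
    have hS : ∀ X ∈ S, X ≠ ⊤ := fun X hX h => by
      have := hSrank X hX
      rw [h, finrank_top, finrank_fin_fun] at this
      omega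
    obtain ⟨Y, hY, hYS⟩ := exists_finrank_eq_forall_not_le hS (by simpa using hrn') hlt
    obtain ⟨X, hX, hYX⟩ := hScov Y hY
    exact hYS X hX hYX
  rw [coveringNumber, hleast.csInf_eq]
  push_cast
  exact geom_sum_eq (by exact_mod_cast Finite.one_lt_card.ne') _

/-- Exact value of $\mathcal{C}_q(n,n-1,r)$. -/
theorem covering_hyperplanes (q n r : ℕ) (hq : IsPrimePow q)
    (hr : 1 ≤ r) (hrn : r ≤ n - 1)
    (F : Type) [Field F] [Fintype F] (hF : Fintype.card F = q) :
    (coveringNumber F n (n - 1) r : ℚ) = ((q : ℚ) ^ (r + 1) - 1) / ((q : ℚ) - 1) :=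
  covering_hyperplanes_general q n r hr hrn F hF
end

section
/- Let q be a prime power and let 1 ≤ r ≤ k ≤ n−1 be integers. Then 𝒞_q(n,k,r) ≤ q^{n−k} · 𝒞_q(n−1, k−1, r−1) + 𝒞_q(n−1, k, r). -/
/-!
Identify `F^(n-1)` with the hyperplane `H = {x₀ = 0}` of `F^n` and let `e = (1, 0, …, 0)`.
An `r`-space inside `H` is covered by a `(n-1, k, r)`-design of `H`. An `r`-space `Y ⊄ H`
contains a vector `e + h` with `h ∈ H`, and `Y = (Y ∩ H) ⊕ ⟨e + h⟩` with `Y ∩ H` of dimension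
`r - 1`; if `X ⊇ Y ∩ H` is a block of a `(n-1, k-1, r-1)`-design of `H`, then
`Y ⊆ X ⊕ ⟨e + h⟩`. This `k`-space depends only on the class of `h` in `H ⧸ X`, which has
`q^(n-k)` elements.
-/

open Module

open Submodule LinearMap

section General

variable {F V W : Type*} [Field F] [AddCommGroup V] [Module F V] [AddCommGroup W] [Module F W]

structure IsCoveringDesign (k r : ℕ) (S : Finset (Submodule F V)) : Prop where
  finrank_eq : ∀ X ∈ S, finrank F X = k
  exists_le : ∀ Y : Submodule F V, finrank F Y = r → ∃ X ∈ S, Y ≤ X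

theorem Submodule.exists_le_finrank_eq_s7 [FiniteDimensional F V] (p : Submodule F V) {k : ℕ}
    (hpk : finrank F p ≤ k) (hk : k ≤ finrank F V) :
    ∃ X : Submodule F V, p ≤ X ∧ finrank F X = k := by
  induction k with
  | zero => exact ⟨p, le_rfl, by omega⟩
  | succ k ih =>
    rcases hpk.eq_or_lt with hpk | hpk
    · exact ⟨p, le_rfl, hpk⟩
    obtain ⟨X, hpX, hX⟩ := ih (by omega) (by omega)
    obtain ⟨v, hv⟩ := X.exists_of_finrank_lt (by omega)
    have hvX : v ∉ X := by simpa using hv 1 one_ne_zero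
    exact ⟨X ⊔ span F {v}, hpX.trans le_sup_left, by rw [finrank_sup_span_singleton hvX, hX]⟩

theorem exists_isCoveringDesign [Finite F] [FiniteDimensional F V] {k r : ℕ} (hrk : r ≤ k)
    (hk : k ≤ finrank F V) : ∃ S : Finset (Submodule F V), IsCoveringDesign k r S := by
  have : Finite V := Module.finite_of_finite F
  have : Finite (Submodule F V) := Finite.of_injective _ SetLike.coe_injective
  refine ⟨(Set.toFinite {X : Submodule F V | finrank F X = k}).toFinset, ⟨by simp, fun Y hY => ?_⟩⟩
  obtain ⟨X, hYX, hX⟩ := Y.exists_le_finrank_eq_s7 (hY ▸ hrk) hk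
  exact ⟨X, by simpa using hX, hYX⟩

theorem Submodule.finrank_map_of_injective {f : V →ₗ[F] W} (hf : Function.Injective f)
    (p : Submodule F V) : finrank F (p.map f) = finrank F p :=
  (LinearEquiv.finrank_eq (p.equivMapOfInjective f hf)).symm

theorem IsCoveringDesign.exists_le_map {k r : ℕ} {S : Finset (Submodule F V)}
    (hS : IsCoveringDesign k r S) {ι : V →ₗ[F] W} (hι : Function.Injective ι) {Y : Submodule F W}
    (hY : finrank F Y = r) (hYι : Y ≤ range ι) : ∃ X ∈ S, Y ≤ X.map ι := by
  have hmap : (Y.comap ι).map ι = Y := map_comap_eq_of_le hYι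
  obtain ⟨X, hXS, hYX⟩ := hS.exists_le (Y.comap ι) (by rw [← finrank_map_of_injective hι, hmap, hY])
  exact ⟨X, hXS, hmap ▸ map_mono hYX⟩

theorem Submodule.sup_span_singleton_eq_of_sub_mem {R M : Type*} [Ring R] [AddCommGroup M]
    [Module R M] {p : Submodule R M} {w w' : M} (h : w - w' ∈ p) :
    p ⊔ span R {w} = p ⊔ span R {w'} := by
  have key : ∀ {a b : M}, a - b ∈ p → p ⊔ span R {a} ≤ p ⊔ span R {b} := fun {a b} hab =>
    sup_le le_sup_left <| (span_singleton_le_iff_mem _ _).mpr <| by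
      simpa using add_mem (mem_sup_left hab) (mem_sup_right (mem_span_singleton_self b))
  exact le_antisymm (key h) (key (by simpa using p.neg_mem h))

variable {π : W →ₗ[F] F}

theorem exists_mem_eq_one_of_not_le_ker {Y : Submodule F W} (hY : ¬Y ≤ ker π) :
    ∃ u ∈ Y, π u = 1 := by
  obtain ⟨y, hyY, hy⟩ := SetLike.not_le_iff_exists.mp hY
  exact ⟨(π y)⁻¹ • y, Y.smul_mem _ hyY, by simpa using inv_mul_cancel₀ hy⟩

theorem le_inf_ker_sup_span {Y : Submodule F W} {u : W} (hu : u ∈ Y) (hπu : π u = 1) :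
    Y ≤ (Y ⊓ ker π) ⊔ span F {u} := fun z hz => by
  have hsplit : z = (z - π z • u) + π z • u := by abel
  rw [hsplit]
  exact add_mem (mem_sup_left ⟨Y.sub_mem hz (Y.smul_mem _ hu), by simp [hπu]⟩)
    (mem_sup_right (smul_mem _ _ (mem_span_singleton_self u)))

theorem finrank_inf_ker_add_one [FiniteDimensional F W] {Y : Submodule F W} {u : W} (hu : u ∈ Y)
    (hπu : π u = 1) : finrank F (Y ⊓ ker π : Submodule F W) + 1 = finrank F Y := by
  have hu' : u ∉ Y ⊓ ker π := fun h => by simpa [hπu] using h.2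
  have hY : (Y ⊓ ker π) ⊔ span F {u} = Y :=
    le_antisymm (sup_le inf_le_left ((span_singleton_le_iff_mem _ _).mpr hu))
      (le_inf_ker_sup_span hu hπu)
  rw [← finrank_sup_span_singleton hu', hY]

variable (ι : V →ₗ[F] W) (e : W)

/-- When `range ι = ker π` and `π e = 1`, these are exactly the subspaces `Z ⊄ ker π` with
`Z ⊓ ker π = ι X`. -/
def extensions (X : Submodule F V) : Set (Submodule F W) :=
  Set.range fun h : V => X.map ι ⊔ span F {e + ι h}

variable {ι e}

theorem finrank_eq_of_mem_extensions [FiniteDimensional F W] (hι : Function.Injective ι)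
    (hιπ : range ι = ker π) (he : π e = 1) {X : Submodule F V} {Z : Submodule F W}
    (hZ : Z ∈ extensions ι e X) : finrank F Z = finrank F X + 1 := by
  obtain ⟨h, rfl⟩ := hZ
  have hιh : ι h ∈ ker π := hιπ ▸ mem_range_self ι h
  have hnotMem : e + ι h ∉ X.map ι := fun hmem => by
    have : e + ι h ∈ ker π := hιπ ▸ map_le_range hmem
    simp_all
  rw [finrank_sup_span_singleton hnotMem, finrank_map_of_injective hι]

theorem IsCoveringDesign.exists_le_of_mem_extensions [FiniteDimensional F W] {k r : ℕ}
    {S : Finset (Submodule F V)} (hS : IsCoveringDesign k r S) (hι : Function.Injective ι)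
    (hιπ : range ι = ker π) (he : π e = 1) {Y : Submodule F W} (hY : finrank F Y = r + 1)
    (hYπ : ¬Y ≤ ker π) : ∃ X ∈ S, ∃ Z ∈ extensions ι e X, Y ≤ Z := by
  obtain ⟨u, huY, hπu⟩ := exists_mem_eq_one_of_not_le_ker hYπ
  obtain ⟨X, hXS, hYX⟩ := hS.exists_le_map hι (Y := Y ⊓ ker π)
    (by have := finrank_inf_ker_add_one huY hπu; omega) (hιπ ▸ inf_le_right)
  obtain ⟨h, hh⟩ : u - e ∈ range ι := hιπ ▸ by simp [hπu, he]
  refine ⟨X, hXS, _, ⟨h, rfl⟩, (le_inf_ker_sup_span huY hπu).trans ?_⟩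
  show _ ≤ X.map ι ⊔ span F {e + ι h}
  rw [hh, add_sub_cancel]
  exact sup_le_sup_right hYX _

variable [Finite F] [FiniteDimensional F V]

variable (ι e) in
theorem finite_extensions (X : Submodule F V) : (extensions ι e X).Finite :=
  have : Finite V := Module.finite_of_finite F
  Set.finite_range _

variable (ι e) in
theorem ncard_extensions_le (X : Submodule F V) :
    (extensions ι e X).ncard ≤ Nat.card F ^ (finrank F V - finrank F X) := by
  have hquot : extensions ι e X = Set.range fun y : V ⧸ X => X.map ι ⊔ span F {e + ι y.out} := by
    refine Set.ext fun Z => ⟨?_, fun ⟨y, hy⟩ => ⟨y.out, hy⟩⟩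
    rintro ⟨h, rfl⟩
    refine ⟨Submodule.Quotient.mk h, sup_span_singleton_eq_of_sub_mem ?_⟩
    have hout : (Submodule.Quotient.mk h : V ⧸ X).out - h ∈ X :=
      (Submodule.Quotient.eq X).mp (Quotient.out_eq _)
    simpa using mem_map_of_mem (f := ι) hout
  have : Finite (V ⧸ X) := Module.finite_of_finite F
  rw [hquot, ← Nat.card_coe_set_eq, ← finrank_quotient, ← natCard_eq_pow_finrank]
  exact Finite.card_range_le _

theorem IsCoveringDesign.exists_succ_card_le [FiniteDimensional F W] {k r : ℕ}
    {S₁ S₂ : Finset (Submodule F V)} (h₁ : IsCoveringDesign k r S₁)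
    (h₂ : IsCoveringDesign (k + 1) (r + 1) S₂) (hι : Function.Injective ι)
    (hιπ : range ι = ker π) (he : π e = 1) :
    ∃ T : Finset (Submodule F W), IsCoveringDesign (k + 1) (r + 1) T ∧
      T.card ≤ Nat.card F ^ (finrank F V - k) * S₁.card + S₂.card := by
  classical
  let T₁ := S₁.biUnion fun X => (finite_extensions ι e X).toFinset
  refine ⟨T₁ ∪ S₂.image (map ι), ⟨fun Z hZ => ?_, fun Y hY => ?_⟩, ?_⟩
  · simp only [T₁, Finset.mem_union, Finset.mem_biUnion, Set.Finite.mem_toFinset,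
      Finset.mem_image] at hZ
    rcases hZ with ⟨X, hX, hZ⟩ | ⟨X, hX, rfl⟩
    · rw [finrank_eq_of_mem_extensions hι hιπ he hZ, h₁.finrank_eq X hX]
    · rw [finrank_map_of_injective hι, h₂.finrank_eq X hX]
  · by_cases hYπ : Y ≤ ker π
    · obtain ⟨X, hX, hYX⟩ := h₂.exists_le_map hι hY (hιπ ▸ hYπ)
      exact ⟨_, Finset.mem_union_right _ (Finset.mem_image_of_mem _ hX), hYX⟩
    · obtain ⟨X, hX, Z, hZ, hYZ⟩ := h₁.exists_le_of_mem_extensions hι hιπ he hY hYπ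
      exact ⟨Z, Finset.mem_union_left _ (Finset.mem_biUnion.mpr ⟨X, hX, by simpa using hZ⟩), hYZ⟩
  · calc (T₁ ∪ S₂.image (map ι)).card ≤ T₁.card + S₂.card :=
          (Finset.card_union_le _ _).trans (by gcongr; exact Finset.card_image_le)
      _ ≤ ∑ X ∈ S₁, (extensions ι e X).ncard + S₂.card := by
          gcongr
          exact Finset.card_biUnion_le.trans_eq
            (Finset.sum_congr rfl fun X _ => (Set.ncard_eq_toFinset_card _ _).symm)
      _ ≤ ∑ _X ∈ S₁, Nat.card F ^ (finrank F V - k) + S₂.card := by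
          gcongr with X hX
          exact h₁.finrank_eq X hX ▸ ncard_extensions_le ι e X
      _ = Nat.card F ^ (finrank F V - k) * S₁.card + S₂.card := by
          rw [Finset.sum_const, smul_eq_mul, mul_comm]

end General

section FinSpace

variable {F : Type} [Field F]

theorem IsCoveringDesign.coveringNumber_le {n k r : ℕ} {S : Finset (Submodule F (Fin n → F))}
    (hS : IsCoveringDesign k r S) : coveringNumber F n k r ≤ S.card :=
  Nat.sInf_le ⟨S, rfl, hS.finrank_eq, hS.exists_le⟩

theorem exists_isCoveringDesign_card_eq_coveringNumber [Finite F] {n k r : ℕ} (hrk : r ≤ k)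
    (hkn : k ≤ n) : ∃ S : Finset (Submodule F (Fin n → F)),
      IsCoveringDesign k r S ∧ S.card = coveringNumber F n k r := by
  obtain ⟨S, hS⟩ := exists_isCoveringDesign (F := F) (V := Fin n → F) hrk (by simpa using hkn)
  obtain ⟨S, hcard, hdim, hcover⟩ := Nat.sInf_mem
    (s := {m | ∃ S : Finset (Submodule F (Fin n → F)), S.card = m ∧ (∀ X ∈ S, finrank F X = k) ∧
      ∀ Y : Submodule F (Fin n → F), finrank F Y = r → ∃ X ∈ S, Y ≤ X})
    ⟨_, S, rfl, hS.finrank_eq, hS.exists_le⟩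
  exact ⟨S, ⟨hdim, hcover⟩, hcard⟩

theorem coveringNumber_succ_le [Finite F] {m k r : ℕ} (hrk : r ≤ k) (hkm : k + 1 ≤ m) :
    coveringNumber F (m + 1) (k + 1) (r + 1) ≤
      Nat.card F ^ (m - k) * coveringNumber F m k r + coveringNumber F m (k + 1) (r + 1) := by
  obtain ⟨S₁, h₁, hcard₁⟩ := exists_isCoveringDesign_card_eq_coveringNumber (F := F) hrk
    (by omega : k ≤ m)
  obtain ⟨S₂, h₂, hcard₂⟩ := exists_isCoveringDesign_card_eq_coveringNumber (F := F)
    (Nat.add_le_add_right hrk 1) hkm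
  let ι := (Fin.consLinearEquiv F fun _ : Fin (m + 1) => F).toLinearMap ∘ₗ inr F F (Fin m → F)
  have hι : Function.Injective ι := by
    rw [coe_comp]
    exact (LinearEquiv.injective _).comp inr_injective
  have hιπ : range ι = ker (proj 0) := by
    ext z
    refine ⟨fun ⟨y, hy⟩ => hy ▸ rfl, fun hz => ⟨Fin.tail z, ?_⟩⟩
    have hz0 : z 0 = 0 := hz
    calc ι (Fin.tail z) = Fin.cons (z 0) (Fin.tail z) := by rw [hz0]; rfl
      _ = z := Fin.cons_self_tail z
  obtain ⟨T, hT, hTcard⟩ := h₁.exists_succ_card_le h₂ hι hιπ (e := Pi.single 0 1) (by simp)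
  rw [finrank_fin_fun, hcard₁, hcard₂] at hTcard
  exact hT.coveringNumber_le.trans hTcard

end FinSpace

theorem recursive_bound_general (q n k r : ℕ)
    (hr : 1 ≤ r) (hrk : r ≤ k) (hkn : k ≤ n - 1)
    (F : Type) [Field F] [Fintype F] (hF : Fintype.card F = q) :
    coveringNumber F n k r ≤
      q ^ (n - k) * coveringNumber F (n - 1) (k - 1) (r - 1) +
        coveringNumber F (n - 1) k r := by
  obtain ⟨r, rfl⟩ : ∃ r', r = r' + 1 := ⟨r - 1, by omega⟩
  obtain ⟨k, rfl⟩ : ∃ k', k = k' + 1 := ⟨k - 1, by omega⟩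
  obtain ⟨m, rfl⟩ : ∃ m, n = m + 1 := ⟨n - 1, by omega⟩
  rw [← hF, ← Nat.card_eq_fintype_card, Nat.add_sub_add_right]
  simp only [Nat.add_sub_cancel]
  exact coveringNumber_succ_le (by omega) (by omega)

/-- The recursive construction bound. -/
theorem recursive_bound (q n k r : ℕ) (hq : IsPrimePow q)
    (hr : 1 ≤ r) (hrk : r ≤ k) (hkn : k ≤ n - 1)
    (F : Type) [Field F] [Fintype F] (hF : Fintype.card F = q) :
    coveringNumber F n k r ≤
      q ^ (n - k) * coveringNumber F (n - 1) (k - 1) (r - 1) +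
        coveringNumber F (n - 1) k r :=
  recursive_bound_general q n k r hr hrk hkn F hF
end

section
/- Let q be a prime power and let v ≥ 2, m ≥ 2, δ ≥ 0 be integers. Then 𝒞_q(vm+δ, vm−m+δ, v−1) = (q^{vm}−1)/(q^m−1). -/
/-!
Lower bound: if `S` covers the `r`-spaces of `V` by subspaces of codimension `m`, then for each
`x ≠ 0` the members of `S` through `x` give, modulo `x`, a covering of the `(r - 1)`-spaces of
`V ⧸ ⟨x⟩`. Counting incidences between nonzero vectors and members of `S` and inducting on `r`
yields `|S| ≥ 1 + Q + ⋯ + Q ^ r` with `Q = q ^ m`.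

Upper bound (a normal spread): let `K` be the degree-`m` extension of `F` and let `π : F^n → K^v`
be an `F`-linear surjection. The kernels of `f ∘ π`, for `f` running over the points of
`ℙ(Dual K (K^v))`, have codimension `m`, and an `F`-subspace `Y` of dimension `< v` lies in one
of them because `π Y` spans a proper `K`-subspace of `K^v`. There are `1 + Q + ⋯ + Q ^ (v - 1)`
such points.
-/

open Module

open Finset
open scoped LinearAlgebra.Projectivization

def IsCoveringDesign_s8 {F V : Type*} [Field F] [AddCommGroup V] [Module F V]
    (S : Finset (Submodule F V)) (k r : ℕ) : Prop :=
  (∀ X ∈ S, finrank F X = k) ∧ ∀ Y : Submodule F V, finrank F Y = r → ∃ X ∈ S, Y ≤ X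

theorem coveringNumber_eq (F : Type) [Field F] {n k r c : ℕ}
    (hupper : ∃ S : Finset (Submodule F (Fin n → F)), IsCoveringDesign_s8 S k r ∧ #S ≤ c)
    (hlower : ∀ S : Finset (Submodule F (Fin n → F)), IsCoveringDesign_s8 S k r → c ≤ #S) :
    coveringNumber F n k r = c := by
  obtain ⟨S, hS, hSc⟩ := hupper
  unfold coveringNumber
  apply le_antisymm
  · refine (Nat.sInf_le ?_).trans hSc
    exact ⟨S, rfl, hS⟩
  · exact le_csInf ⟨_, S, rfl, hS⟩ fun _ ⟨S', hcard, hS'⟩ => hcard ▸ hlower S' hS'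

section CoveringDesign

variable {F V : Type*} [Field F] [AddCommGroup V] [Module F V]

theorem Submodule.finrank_comap_mkQ_s8 [FiniteDimensional F V] (p : Submodule F V)
    (Y : Submodule F (V ⧸ p)) : finrank F (Y.comap p.mkQ) = finrank F Y + finrank F p := by
  have h := LinearMap.finrank_range_add_finrank_ker (p.mkQ.domRestrict (Y.comap p.mkQ))
  rw [LinearMap.range_domRestrict, Submodule.map_comap_eq_of_surjective p.mkQ_surjective,
    LinearMap.ker_domRestrict, Submodule.ker_mkQ,
    (Submodule.comapSubtypeEquivOfLe (Submodule.le_comap_mkQ p Y)).finrank_eq] at h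
  exact h.symm

theorem Submodule.finrank_eq_finrank_map_mkQ_add [FiniteDimensional F V] {p X : Submodule F V}
    (h : p ≤ X) : finrank F X = finrank F (X.map p.mkQ) + finrank F p := by
  rw [← Submodule.finrank_comap_mkQ_s8, Submodule.comap_map_mkQ, sup_eq_right.mpr h]

open scoped Classical in
theorem IsCoveringDesign_s8.image_mkQ [FiniteDimensional F V] {S : Finset (Submodule F V)} {k r : ℕ}
    (hS : IsCoveringDesign_s8 S (k + 1) (r + 1)) {x : V} (hx : x ≠ 0) :
    IsCoveringDesign_s8 ({X ∈ S | x ∈ X}.image (Submodule.map (F ∙ x).mkQ)) k r := by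
  have hx1 : finrank F (F ∙ x) = 1 := finrank_span_singleton hx
  constructor
  · simp only [mem_image, mem_filter]
    rintro _ ⟨X, ⟨hXS, hxX⟩, rfl⟩
    have := Submodule.finrank_eq_finrank_map_mkQ_add
      ((Submodule.span_singleton_le_iff_mem _ _).mpr hxX)
    rw [hS.1 X hXS, hx1] at this
    omega
  · intro Y hY
    have hxY : x ∈ Y.comap (F ∙ x).mkQ :=
      Submodule.le_comap_mkQ _ Y (Submodule.mem_span_singleton_self x)
    obtain ⟨X, hXS, hYX⟩ :=
      hS.2 (Y.comap (F ∙ x).mkQ) (by rw [Submodule.finrank_comap_mkQ_s8, hY, hx1])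
    refine ⟨X.map (F ∙ x).mkQ, mem_image_of_mem _ (mem_filter.mpr ⟨hXS, hYX hxY⟩), ?_⟩
    rw [← Submodule.map_comap_eq_of_surjective (F ∙ x).mkQ_surjective Y]
    exact Submodule.map_mono hYX

open scoped Classical in
theorem sum_card_filter_mem_eq_card_mul [Fintype V] {S : Finset (Submodule F V)} {k : ℕ}
    (hS : ∀ X ∈ S, finrank F X = k) :
    ∑ x ∈ univ.erase (0 : V), #{X ∈ S | x ∈ X} = #S * (Nat.card F ^ k - 1) := by
  have hX : ∀ X ∈ S, #{x ∈ univ.erase (0 : V) | x ∈ X} = Nat.card F ^ k - 1 := by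
    intro X hX
    rw [filter_erase, card_erase_of_mem (mem_filter.mpr ⟨mem_univ _, X.zero_mem⟩),
      ← Fintype.card_subtype, Fintype.card_eq_nat_card, Module.natCard_eq_pow_finrank (K := F),
      hS X hX]
  calc ∑ x ∈ univ.erase (0 : V), #{X ∈ S | x ∈ X}
      = ∑ X ∈ S, #{x ∈ univ.erase (0 : V) | x ∈ X} := by
        simp_rw [card_filter]; exact sum_comm
    _ = #S * (Nat.card F ^ k - 1) := by rw [sum_congr rfl hX, sum_const, smul_eq_mul]

end CoveringDesign

theorem Nat.mul_lt_of_mul_sub_one_le {A B N c : ℕ} (hA : 2 ≤ A) (hB : 1 ≤ B) (hN : 1 ≤ N)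
    (h : (A * B - 1) * N ≤ c * (B - 1)) : A * N < c := by
  by_contra! hc
  have h1 : 1 ≤ A * B := Nat.one_le_iff_ne_zero.mpr (by positivity)
  zify [h1, hB] at h hc
  nlinarith

open scoped Classical in
theorem IsCoveringDesign_s8.geom_sum_le_card {F V : Type*} [Field F] [Finite F] [AddCommGroup V]
    [Module F V] [FiniteDimensional F V] {m k r : ℕ} (hm : m ≠ 0) (hV : finrank F V = k + m)
    (hr : r ≤ k) {S : Finset (Submodule F V)} (hS : IsCoveringDesign_s8 S k r) :
    ∑ i ∈ range (r + 1), (Nat.card F ^ m) ^ i ≤ #S := by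
  induction r generalizing V k with
  | zero =>
    obtain ⟨X, hX, -⟩ := hS.2 ⊥ (finrank_bot F V)
    simpa using card_pos.mpr ⟨X, hX⟩
  | succ r ih =>
    obtain ⟨k, rfl⟩ : ∃ k', k = k' + 1 := ⟨k - 1, by omega⟩
    have : Finite V := Module.finite_of_finite F
    have : Fintype V := Fintype.ofFinite V
    have hq : 2 ≤ Nat.card F := Finite.one_lt_card
    set N := ∑ i ∈ range (r + 1), (Nat.card F ^ m) ^ i
    have hcontaining : ∀ x ∈ univ.erase (0 : V), N ≤ #{X ∈ S | x ∈ X} := fun x hx =>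
      have hx0 := ne_of_mem_erase hx
      (ih (by rw [Submodule.finrank_quotient, hV, finrank_span_singleton hx0]; omega) (by omega)
        (hS.image_mkQ hx0)).trans card_image_le
    have hcount : (Nat.card F ^ (k + 1 + m) - 1) * N ≤ #S * (Nat.card F ^ (k + 1) - 1) := by
      rw [← sum_card_filter_mem_eq_card_mul hS.1]
      calc (Nat.card F ^ (k + 1 + m) - 1) * N = ∑ x ∈ univ.erase (0 : V), N := by
            rw [sum_const, smul_eq_mul, card_erase_of_mem (mem_univ _), card_univ,
              Fintype.card_eq_nat_card, Module.natCard_eq_pow_finrank (K := F) (V := V), hV]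
        _ ≤ _ := sum_le_sum hcontaining
    have hN : 1 ≤ N := by simp only [N, sum_range_succ', pow_zero]; omega
    rw [geom_sum_succ, Nat.add_one_le_iff]
    refine Nat.mul_lt_of_mul_sub_one_le (B := Nat.card F ^ (k + 1)) ?_
      (Nat.one_le_pow _ _ (by omega)) hN ?_
    · exact (Nat.le_self_pow hm _).trans' hq
    · rwa [← pow_add, add_comm m]

section Spread

variable {F K U V : Type*} [Field F] [Field K] [Algebra F K] [AddCommGroup U] [Module K U]
  [Module F U] [IsScalarTower F K U] [AddCommGroup V] [Module F V]

theorem Submodule.finrank_span_le_finrank (M : Submodule F U) [FiniteDimensional F M] :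
    finrank K (Submodule.span K (M : Set U)) ≤ finrank F M := by
  let b := Module.finBasis F M
  have hspan : Submodule.span K (M : Set U) = Submodule.span K (Set.range (M.subtype ∘ b)) := by
    rw [← Submodule.span_span_of_tower F K (Set.range _), Set.range_comp, ← Submodule.map_span,
      b.span_eq, Submodule.map_top, Submodule.range_subtype]
  rw [hspan]
  exact (finrank_range_le_card _).trans (by simp)

theorem finrank_ker_restrictScalars_comp_add [FiniteDimensional F V] {π : V →ₗ[F] U}
    (hπ : Function.Surjective π) {f : Dual K U} (hf : f ≠ 0) :
    finrank F (LinearMap.ker (f.restrictScalars F ∘ₗ π)) + finrank F K = finrank F V := by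
  have hsurj : Function.Surjective (f.restrictScalars F ∘ₗ π) :=
    (LinearMap.surjective_of_ne_zero hf).comp hπ
  have h := LinearMap.finrank_range_add_finrank_ker (f.restrictScalars F ∘ₗ π)
  rw [LinearMap.range_eq_top.mpr hsurj, finrank_top] at h
  omega

theorem exists_dual_ne_zero_le_ker [FiniteDimensional F V] (π : V →ₗ[F] U) {Y : Submodule F V}
    (hY : finrank F Y < finrank K U) :
    ∃ f : Dual K U, f ≠ 0 ∧ Y ≤ LinearMap.ker (f.restrictScalars F ∘ₗ π) := by
  have hZ : Submodule.span K (Y.map π : Set U) ≠ ⊤ := by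
    intro h
    have := (Submodule.finrank_span_le_finrank (K := K) (Y.map π)).trans
      (Submodule.finrank_map_le π Y)
    rw [h, finrank_top] at this
    omega
  obtain ⟨f, hfZ, hf⟩ :=
    Submodule.ne_bot_iff _ |>.mp (mt Submodule.dualAnnihilator_eq_bot_iff.mp hZ)
  exact ⟨f, hf, fun y hy => (Submodule.mem_dualAnnihilator f).mp hfZ _
    (Submodule.subset_span (Submodule.mem_map_of_mem hy))⟩

open scoped Classical in
theorem exists_isCoveringDesign_card_le_card_projectivization [Finite K] [FiniteDimensional K U]
    [FiniteDimensional F V] {π : V →ₗ[F] U} (hπ : Function.Surjective π) {r : ℕ}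
    (hr : r < finrank K U) :
    ∃ S : Finset (Submodule F V), IsCoveringDesign_s8 S (finrank F V - finrank F K) r ∧
      #S ≤ Nat.card (ℙ K (Dual K U)) := by
  have : Finite (Dual K U) := Module.finite_of_finite K
  have : Fintype (ℙ K (Dual K U)) := Fintype.ofFinite _
  refine ⟨univ.image fun p : ℙ K (Dual K U) => LinearMap.ker (p.rep.restrictScalars F ∘ₗ π),
    ⟨?_, ?_⟩, ?_⟩
  · simp only [mem_image, mem_univ, true_and]
    rintro _ ⟨p, rfl⟩
    have := finrank_ker_restrictScalars_comp_add hπ p.rep_nonzero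
    omega
  · intro Y hY
    obtain ⟨f, hf, hYf⟩ := exists_dual_ne_zero_le_ker π (hY ▸ hr)
    obtain ⟨c, hc⟩ := Projectivization.exists_smul_eq_mk_rep K f hf
    refine ⟨_, mem_image_of_mem _ (mem_univ (Projectivization.mk K f hf)), ?_⟩
    intro y hy
    have := hYf hy
    simp only [LinearMap.mem_ker, LinearMap.coe_comp, Function.comp_apply,
      LinearMap.coe_restrictScalars] at this ⊢
    rw [← hc, LinearMap.smul_apply, this, smul_zero]
  · exact card_image_le.trans (card_univ.trans Fintype.card_eq_nat_card).le

end Spread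

theorem exists_isCoveringDesign_card_le_geom_sum {F V : Type*} [Field F] [Finite F]
    [AddCommGroup V] [Module F V] [FiniteDimensional F V] {m v r : ℕ} (hm : m ≠ 0)
    (hV : v * m ≤ finrank F V) (hr : r < v) :
    ∃ S : Finset (Submodule F V), IsCoveringDesign_s8 S (finrank F V - m) r ∧
      #S ≤ ∑ i ∈ range v, (Nat.card F ^ m) ^ i := by
  have : Fact (ringChar F).Prime := ⟨CharP.prime_ringChar F⟩
  have : NeZero m := ⟨hm⟩
  let K := FiniteField.Extension F (ringChar F) m
  have hK : finrank F K = m := FiniteField.finrank_extension F (ringChar F) m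
  obtain ⟨ι, hι⟩ : ∃ ι : (Fin v → K) →ₗ[F] V, Function.Injective ι := by
    rw [← finrank_le_iff_exists_linearMap, ← Module.finrank_mul_finrank F K, hK, finrank_fin_fun,
      mul_comm]
    exact hV
  obtain ⟨π, hπ⟩ := ι.exists_leftInverse_of_injective (LinearMap.ker_eq_bot.mpr hι)
  obtain ⟨S, hS, hcard⟩ := exists_isCoveringDesign_card_le_card_projectivization (K := K)
    (LinearMap.surjective_of_comp_eq_id ι π hπ) (r := r) (by rwa [finrank_fin_fun])
  rw [hK] at hS
  refine ⟨S, hS, hcard.trans_eq ?_⟩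
  rw [Projectivization.card_of_finrank K _ (by simp : finrank K (Dual K (Fin v → K)) = v),
    FiniteField.natCard_extension]

theorem normal_spread_value_general (q v m δ : ℕ)
    (hv : 2 ≤ v) (hm : 2 ≤ m) :
    ∀ (F : Type) [Field F] [Fintype F], Fintype.card F = q →
    (coveringNumber F (v * m + δ) (v * m - m + δ) (v - 1) : ℚ) =
      ((q : ℚ) ^ (v * m) - 1) / ((q : ℚ) ^ m - 1) := by
  intro F _ _ hF
  have hdim : finrank F (Fin (v * m + δ) → F) = v * m + δ := finrank_fin_fun F
  have hmv : m ≤ v * m := Nat.le_mul_of_pos_left m (by omega)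
  have hrk : v - 1 ≤ v * m - m + δ :=
    calc v - 1 ≤ (v - 1) * m := Nat.le_mul_of_pos_right _ (by omega)
      _ = v * m - m := Nat.sub_one_mul v m
      _ ≤ v * m - m + δ := Nat.le_add_right _ _
  have hcov : coveringNumber F (v * m + δ) (v * m - m + δ) (v - 1) =
      ∑ i ∈ range v, (q ^ m) ^ i := by
    rw [← hF, Fintype.card_eq_nat_card]
    refine coveringNumber_eq F ?_ fun S hS => ?_
    · obtain ⟨S, hS, hcard⟩ := exists_isCoveringDesign_card_le_geom_sum
        (V := Fin (v * m + δ) → F) (m := m) (v := v) (r := v - 1) (by omega)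
        (by rw [hdim]; omega) (by omega)
      rw [hdim, show v * m + δ - m = v * m - m + δ by omega] at hS
      exact ⟨S, hS, hcard⟩
    · have := hS.geom_sum_le_card (m := m) (by omega) (by rw [hdim]; omega) hrk
      rwa [Nat.sub_add_cancel (by omega : 1 ≤ v)] at this
  have hQ : (1 : ℚ) < (q : ℚ) ^ m := by
    have : 1 < q := hF ▸ Fintype.one_lt_card
    exact_mod_cast Nat.one_lt_pow (by omega) this
  rw [hcov]
  push_cast
  rw [geom_sum_eq hQ.ne', ← pow_mul, mul_comm m v]

/-- Exact values from normal spreads. -/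
theorem normal_spread_value (q v m δ : ℕ) (hq : IsPrimePow q)
    (hv : 2 ≤ v) (hm : 2 ≤ m) :
    ∀ (F : Type) [Field F] [Fintype F], Fintype.card F = q →
    (coveringNumber F (v * m + δ) (v * m - m + δ) (v - 1) : ℚ) =
      ((q : ℚ) ^ (v * m) - 1) / ((q : ℚ) ^ m - 1) :=
  normal_spread_value_general q v m δ hv hm
end

section
/- Let k ≥ 3 be an integer. Then 𝒞_2(2k, k, 2) ≤ 2^{2k} + 6·(2^k−1). -/
open Module

/-!
Identify `F₂^{2k}` with `K × K`, `K = 𝔽_{2^k}`; it suffices that every pair of vectors lies in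
one of the chosen `k`-dimensional subspaces. Pairs with distinct nonzero first coordinates
`u ≠ v` lie on the graph of some `x ↦ a x + b x²` (Lagrange interpolation through `(u, p)`,
`(v, q)`, and `x²` is `F₂`-linear): `2^{2k}` graphs. Every other pair lies in a subspace
`{0} × ker φ + F₂ (u, w)`. Fix an isomorphism `e : K ≃ K*` and `g ∉ {0, 1}`. For each `u ≠ 0`
the three functionals `e (c u)`, `c ∈ {1, g, 1 + g}`, sum to zero, so over `F₂` one of them kills
any given vertical vector `(0, v)`; together with the two cosets of `ker φ` this gives `6 (2^k - 1)` subspaces, and when `u = 0` a functional killing two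
given vectors exists because `k ≥ 3`.
-/

section Covering

variable {F : Type} {V : Type*} [Field F] [AddCommGroup V] [Module F V]

theorem coveringNumber_le_card_s11 [FiniteDimensional F V] {n k r : ℕ} (hV : finrank F V = n)
    (S : Finset (Submodule F V)) (hdim : ∀ X ∈ S, finrank F X = k)
    (hcov : ∀ Y : Submodule F V, finrank F Y = r → ∃ X ∈ S, Y ≤ X) :
    coveringNumber F n k r ≤ S.card := by
  classical
  let e : V ≃ₗ[F] (Fin n → F) := LinearEquiv.ofFinrankEq _ _ (by simp [hV])
  refine le_trans (Nat.sInf_le ⟨S.image (Submodule.map (e : V →ₗ[F] Fin n → F)), rfl, ?_, ?_⟩)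
    Finset.card_image_le
  · simp only [Finset.mem_image, forall_exists_index, and_imp]
    rintro _ X hX rfl
    rw [LinearEquiv.finrank_map_eq, hdim X hX]
  · intro Y hY
    obtain ⟨X, hX, hYX⟩ := hcov (Y.map (e.symm : (Fin n → F) →ₗ[F] V))
      (by rwa [LinearEquiv.finrank_map_eq])
    exact ⟨_, Finset.mem_image_of_mem _ hX, fun y hy => ⟨e.symm y, hYX ⟨y, hy, rfl⟩, by simp⟩⟩

theorem exists_le_of_forall_pair_mem {S : Set (Submodule F V)}
    (hS : ∀ y₀ y₁ : V, ∃ X ∈ S, y₀ ∈ X ∧ y₁ ∈ X) {Y : Submodule F V} (hY : finrank F Y = 2) :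
    ∃ X ∈ S, Y ≤ X := by
  have : FiniteDimensional F Y := .of_finrank_pos (by omega)
  let b := finBasisOfFinrankEq F Y hY
  obtain ⟨X, hX, h₀, h₁⟩ := hS (b 0) (b 1)
  refine ⟨X, hX, ?_⟩
  have hb : Set.range (Y.subtype ∘ b) ⊆ X := Set.range_subset_iff.2 (Fin.forall_fin_two.2 ⟨h₀, h₁⟩)
  rw [← Submodule.map_subtype_top Y, ← b.span_eq, Submodule.map_span, ← Set.range_comp]
  exact Submodule.span_le.2 hb

end Covering

section KerSpan

variable {F K : Type*} [Field F] [AddCommGroup K] [Module F K]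

def kerSpanSubspace (φ : Dual F K) (u w : K) : Submodule F (K × K) :=
  (LinearMap.ker φ).map (LinearMap.inr F K K) ⊔ F ∙ (u, w)

theorem zero_prod_mem_kerSpanSubspace {φ : Dual F K} (u w : K) {v : K} (hv : φ v = 0) :
    ((0 : K), v) ∈ kerSpanSubspace φ u w :=
  Submodule.mem_sup_left ⟨v, hv, rfl⟩

theorem mk_mem_kerSpanSubspace {φ : Dual F K} (u w : K) {v : K} (hv : φ (v - w) = 0) :
    (u, v) ∈ kerSpanSubspace φ u w := by
  have hsplit : (u, v) = ((0 : K), v - w) + (u, w) := by simp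
  rw [hsplit]
  exact add_mem (zero_prod_mem_kerSpanSubspace u w hv)
    (Submodule.mem_sup_right (Submodule.mem_span_singleton_self _))

theorem finrank_kerSpanSubspace [FiniteDimensional F K] {φ : Dual F K} (hφ : φ ≠ 0) {u : K}
    (hu : u ≠ 0) (w : K) : finrank F (kerSpanSubspace φ u w) = finrank F K := by
  have hinr : finrank F ((LinearMap.ker φ).map (LinearMap.inr F K K)) =
      finrank F (LinearMap.ker φ) :=
    (Submodule.equivMapOfInjective _ LinearMap.inr_injective _).finrank_eq.symm
  have hdisj : Disjoint ((LinearMap.ker φ).map (LinearMap.inr F K K)) (F ∙ (u, w)) := by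
    rw [Submodule.disjoint_span_singleton' (by simp [hu])]
    rintro ⟨v, -, hv⟩
    exact hu (congrArg Prod.fst hv).symm
  have hsum := Submodule.finrank_sup_add_finrank_inf_eq
    ((LinearMap.ker φ).map (LinearMap.inr F K K)) (F ∙ (u, w))
  rw [hdisj.eq_bot, finrank_bot, hinr, finrank_span_singleton (by simp [hu]),
    Module.Dual.finrank_ker_add_one_of_ne_zero hφ, add_zero] at hsum
  exact hsum

end KerSpan

section Graph

theorem exists_mul_add_mul_sq_eq {K : Type*} [Field K] {u v : K} (hu : u ≠ 0) (hv : v ≠ 0)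
    (huv : u ≠ v) (p q : K) : ∃ a b : K, a * u + b * u ^ 2 = p ∧ a * v + b * v ^ 2 = q := by
  have hd : u * v * (v - u) ≠ 0 := mul_ne_zero (mul_ne_zero hu hv) (sub_ne_zero.2 huv.symm)
  refine ⟨(p * v ^ 2 - q * u ^ 2) / (u * v * (v - u)), (q * u - p * v) / (u * v * (v - u)), ?_, ?_⟩ <;>
  · field_simp
    ring

variable {K : Type*} [Field K] [Algebra (ZMod 2) K]

def quadMap (a b : K) : K →ₗ[ZMod 2] K where
  toFun x := a * x + b * x ^ 2
  map_add' x y := by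
    have : CharP K 2 := charP_of_injective_algebraMap (algebraMap (ZMod 2) K).injective 2
    rw [add_pow_char]
    ring
  map_smul' r x := by
    rw [RingHom.id_apply, Algebra.smul_def, Algebra.smul_def, mul_pow, ← map_pow, ZMod.pow_card]
    ring

theorem finrank_graph_quadMap (a b : K) :
    finrank (ZMod 2) (quadMap a b).graph = finrank (ZMod 2) K := by
  rw [LinearMap.graph_eq_range_prod, LinearMap.finrank_range_of_inj]
  exact fun x y h => congrArg Prod.fst h

end Graph

theorem Module.Dual.apply_invFun_one {F V : Type*} [Field F] [AddCommGroup V] [Module F V]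
    [Nonempty V] {φ : Dual F V} (hφ : φ ≠ 0) : φ (Function.invFun φ 1) = 1 :=
  Function.invFun_eq (LinearMap.surjective hφ 1)

theorem Module.Dual.exists_ne_zero_apply_eq_zero {F V : Type*} [Field F] [AddCommGroup V]
    [Module F V] [FiniteDimensional F V] (hV : 2 < finrank F V) (v w : V) :
    ∃ φ : Dual F V, φ ≠ 0 ∧ φ v = 0 ∧ φ w = 0 := by
  have hker : LinearMap.ker ((LinearMap.applyₗ v).prod (LinearMap.applyₗ w) :
      Dual F V →ₗ[F] F × F) ≠ ⊥ :=
    LinearMap.ker_ne_bot_of_finrank_lt (by simpa [Subspace.dual_finrank_eq] using hV)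
  obtain ⟨φ, hφ, hφ0⟩ := (Submodule.ne_bot_iff _).1 hker
  exact ⟨φ, hφ0, congrArg Prod.fst hφ, congrArg Prod.snd hφ⟩

section Construction

variable {K : Type*} [Field K] [Algebra (ZMod 2) K]

open Classical in
theorem ne_zero_of_mem_triple {g : K} (hg0 : g ≠ 0) (hg1 : g ≠ 1) {c : K}
    (hc : c ∈ ({1, g, 1 + g} : Finset K)) : c ≠ 0 := by
  have : CharP K 2 := charP_of_injective_algebraMap (algebraMap (ZMod 2) K).injective 2
  simp only [Finset.mem_insert, Finset.mem_singleton] at hc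
  rcases hc with rfl | rfl | rfl
  · exact one_ne_zero
  · exact hg0
  · rw [Ne, add_eq_zero_iff_eq_neg', CharTwo.neg_eq]
    exact hg1

open Classical in
theorem exists_apply_eq_zero_of_mem_triple (e : K ≃ₗ[ZMod 2] Dual (ZMod 2) K) (g u v : K) :
    ∃ c ∈ ({1, g, 1 + g} : Finset K), e (c * u) v = 0 := by
  have hsum : e ((1 + g) * u) v = e (1 * u) v + e (g * u) v := by
    rw [add_mul, map_add, LinearMap.add_apply]
  have hF₂ : ∀ a b : ZMod 2, a = 0 ∨ b = 0 ∨ a + b = 0 := by decide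
  rcases hF₂ (e (1 * u) v) (e (g * u) v) with h | h | h
  · exact ⟨1, by simp, h⟩
  · exact ⟨g, by simp, h⟩
  · exact ⟨1 + g, by simp, hsum.trans h⟩

variable [Fintype K]

variable (K) in
open Classical in
noncomputable def graphFamily : Finset (Submodule (ZMod 2) (K × K)) :=
  Finset.univ.image fun ab : K × K => (quadMap ab.1 ab.2).graph

open Classical in
/-- `φ (Function.invFun φ 1) = 1`, so the two values of `j` give the two cosets of `ker φ`. -/
noncomputable def kerSpanFamily (e : K ≃ₗ[ZMod 2] Dual (ZMod 2) K) (g : K) :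
    Finset (Submodule (ZMod 2) (K × K)) :=
  ((Finset.univ.erase 0) ×ˢ ({1, g, 1 + g} ×ˢ (Finset.univ : Finset (ZMod 2)))).image
    fun ⟨u, c, j⟩ => kerSpanSubspace (e (c * u)) u (j • Function.invFun (e (c * u)) 1)

variable {e : K ≃ₗ[ZMod 2] Dual (ZMod 2) K} {g : K}

theorem card_graphFamily_le : (graphFamily K).card ≤ Fintype.card K ^ 2 :=
  Finset.card_image_le.trans (by simp [sq])

theorem card_kerSpanFamily_le : (kerSpanFamily e g).card ≤ 6 * (Fintype.card K - 1) := by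
  classical
  refine Finset.card_image_le.trans ?_
  rw [Finset.card_product, Finset.card_product, Finset.card_erase_of_mem (Finset.mem_univ _),
    Finset.card_univ, Finset.card_univ, ZMod.card]
  have := Finset.card_le_three (a := (1 : K)) (b := g) (c := 1 + g)
  nlinarith

theorem finrank_of_mem_graphFamily {X : Submodule (ZMod 2) (K × K)} (hX : X ∈ graphFamily K) :
    finrank (ZMod 2) X = finrank (ZMod 2) K := by
  classical
  obtain ⟨⟨a, b⟩, -, rfl⟩ := Finset.mem_image.1 hX
  exact finrank_graph_quadMap a b

theorem finrank_of_mem_kerSpanFamily (hg0 : g ≠ 0) (hg1 : g ≠ 1)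
    {X : Submodule (ZMod 2) (K × K)} (hX : X ∈ kerSpanFamily e g) :
    finrank (ZMod 2) X = finrank (ZMod 2) K := by
  classical
  obtain ⟨⟨u, c, j⟩, hmem, rfl⟩ := Finset.mem_image.1 hX
  simp only [Finset.mem_product, Finset.mem_erase, Finset.mem_univ, and_true] at hmem
  have hcu : c * u ≠ 0 := mul_ne_zero (ne_zero_of_mem_triple hg0 hg1 hmem.2) hmem.1
  exact finrank_kerSpanSubspace (e.map_ne_zero_iff.2 hcu) hmem.1 _

open Classical in
theorem kerSpanSubspace_mem_kerSpanFamily {u c : K} (hu : u ≠ 0)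
    (hc : c ∈ ({1, g, 1 + g} : Finset K)) (j : ZMod 2) :
    kerSpanSubspace (e (c * u)) u (j • Function.invFun (e (c * u)) 1) ∈ kerSpanFamily e g :=
  Finset.mem_image.2 ⟨(u, c, j), by simp [hu, hc], rfl⟩

theorem exists_mem_kerSpanFamily_zero_prod (hg0 : g ≠ 0) (hg1 : g ≠ 1) {u : K} (hu : u ≠ 0)
    (v w : K) : ∃ X ∈ kerSpanFamily e g, ((0 : K), v) ∈ X ∧ (u, w) ∈ X := by
  obtain ⟨c, hc, hcv⟩ := exists_apply_eq_zero_of_mem_triple e g u v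
  have hφ : e (c * u) ≠ 0 :=
    e.map_ne_zero_iff.2 (mul_ne_zero (ne_zero_of_mem_triple hg0 hg1 hc) hu)
  refine ⟨_, kerSpanSubspace_mem_kerSpanFamily hu hc (e (c * u) w),
    zero_prod_mem_kerSpanSubspace _ _ hcv, mk_mem_kerSpanSubspace _ _ ?_⟩
  rw [map_sub, map_smul, Module.Dual.apply_invFun_one hφ, smul_eq_mul, mul_one, sub_self]

theorem exists_mem_kerSpanFamily_zero_prod_zero_prod (hK : 2 < finrank (ZMod 2) K) (v w : K) :
    ∃ X ∈ kerSpanFamily e g, ((0 : K), v) ∈ X ∧ ((0 : K), w) ∈ X := by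
  obtain ⟨φ, hφ, hv, hw⟩ := Module.Dual.exists_ne_zero_apply_eq_zero hK v w
  have hmem := kerSpanSubspace_mem_kerSpanFamily (e := e) (g := g) (c := 1)
    (e.symm.map_ne_zero_iff.2 hφ) (by simp) 0
  rw [one_mul, e.apply_symm_apply] at hmem
  exact ⟨_, hmem, zero_prod_mem_kerSpanSubspace _ _ hv, zero_prod_mem_kerSpanSubspace _ _ hw⟩

theorem exists_mem_graphFamily {u v : K} (hu : u ≠ 0) (hv : v ≠ 0) (huv : u ≠ v) (p q : K) :
    ∃ X ∈ graphFamily K, (u, p) ∈ X ∧ (v, q) ∈ X := by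
  obtain ⟨a, b, hp, hq⟩ := exists_mul_add_mul_sq_eq hu hv huv p q
  exact ⟨_, Finset.mem_image_of_mem _ (Finset.mem_univ (a, b)),
    (LinearMap.mem_graph_iff _ _).2 hp.symm, (LinearMap.mem_graph_iff _ _).2 hq.symm⟩

open Classical in
theorem exists_pair_mem_graphFamily_union_kerSpanFamily (hK : 2 < finrank (ZMod 2) K)
    (hg0 : g ≠ 0) (hg1 : g ≠ 1) (y₀ y₁ : K × K) :
    ∃ X ∈ graphFamily K ∪ kerSpanFamily e g, y₀ ∈ X ∧ y₁ ∈ X := by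
  simp only [Finset.mem_union, or_and_right, exists_or]
  obtain ⟨u₀, w₀⟩ := y₀
  obtain ⟨u₁, w₁⟩ := y₁
  rcases eq_or_ne u₀ 0 with rfl | hu₀ <;> rcases eq_or_ne u₁ 0 with rfl | hu₁
  · exact .inr (exists_mem_kerSpanFamily_zero_prod_zero_prod hK w₀ w₁)
  · exact .inr (exists_mem_kerSpanFamily_zero_prod hg0 hg1 hu₁ w₀ w₁)
  · obtain ⟨X, hX, h₁, h₀⟩ := exists_mem_kerSpanFamily_zero_prod (e := e) hg0 hg1 hu₀ w₁ w₀
    exact .inr ⟨X, hX, h₀, h₁⟩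
  rcases eq_or_ne u₀ u₁ with rfl | hu
  · -- `(u₀, w₁) = (0, w₁ - w₀) + (u₀, w₀)`
    obtain ⟨X, hX, h, h₀⟩ := exists_mem_kerSpanFamily_zero_prod (e := e) hg0 hg1 hu₀ (w₁ - w₀) w₀
    refine .inr ⟨X, hX, h₀, ?_⟩
    simpa using add_mem h h₀
  · exact .inl (exists_mem_graphFamily hu₀ hu₁ hu w₀ w₁)

end Construction

theorem coveringNumber_two_mul_finrank_le {K : Type} [Field K] [Fintype K] [Algebra (ZMod 2) K]
    (hK : 3 ≤ finrank (ZMod 2) K) :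
    coveringNumber (ZMod 2) (2 * finrank (ZMod 2) K) (finrank (ZMod 2) K) 2 ≤
      Fintype.card K ^ 2 + 6 * (Fintype.card K - 1) := by
  classical
  obtain ⟨g, -, hg⟩ := Finset.exists_mem_notMem_of_card_lt_card (s := {0, 1})
    (t := (Finset.univ : Finset K)) <| calc
      ({0, 1} : Finset K).card ≤ 2 := Finset.card_le_two
      _ < 2 ^ 3 := by norm_num
      _ ≤ 2 ^ finrank (ZMod 2) K := Nat.pow_le_pow_right two_pos hK
      _ = Fintype.card K := by rw [Module.card_eq_pow_finrank (K := ZMod 2), ZMod.card]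
  simp only [Finset.mem_insert, Finset.mem_singleton, not_or] at hg
  let e := (Module.finBasis (ZMod 2) K).toDualEquiv
  calc _ ≤ (graphFamily K ∪ kerSpanFamily e g).card := by
        refine coveringNumber_le_card_s11 (by rw [finrank_prod, two_mul]) _ ?_ fun Y hY => ?_
        · intro X hX
          rcases Finset.mem_union.1 hX with hX | hX
          · exact finrank_of_mem_graphFamily hX
          · exact finrank_of_mem_kerSpanFamily hg.1 hg.2 hX
        · exact exists_le_of_forall_pair_mem
            (exists_pair_mem_graphFamily_union_kerSpanFamily (by omega) hg.1 hg.2) hY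
    _ ≤ _ := (Finset.card_union_le _ _).trans
        (add_le_add card_graphFamily_le card_kerSpanFamily_le)

/-- $\mathcal{C}_2(2k,k,2) \le 2^{2k} + 6(2^k-1)$. -/
theorem simple_CMRD_bound (k : ℕ) (hk : 3 ≤ k) :
    coveringNumber (ZMod 2) (2 * k) k 2 ≤ 2 ^ (2 * k) + 6 * (2 ^ k - 1) := by
  let : Fintype (GaloisField 2 k) := Fintype.ofFinite _
  have hfinrank : finrank (ZMod 2) (GaloisField 2 k) = k := GaloisField.finrank 2 (by omega)
  have hcard : Fintype.card (GaloisField 2 k) = 2 ^ k := by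
    rw [Fintype.card_eq_nat_card, GaloisField.card 2 k (by omega)]
  have := coveringNumber_two_mul_finrank_le (K := GaloisField 2 k) (by omega)
  rwa [hfinrank, hcard, ← pow_mul, mul_comm k] at this
end

section
/- Let k ≥ 1 and r ≥ 1 be integers, let α be a generator of the multiplicative group of the finite field F_{2^k}, and let X be an F_2-linear subspace of F_{2^k} (regarded as a vector space over F_2) of dimension r. If 2^k−1 and 2^r−1 are relatively prime, then the subspaces α^j·X = { α^j · x : x ∈ X } for 0 ≤ j ≤ 2^k−2 are pairwise distinct; that is, the set { α^j·X : 0 ≤ j ≤ 2^k−2 } contains exactly 2^k−1 distinct r-dimensional F_2-subspaces of F_{2^k}. -/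
/-!
The stabilizer `H` of `X` in `𝔽_{2^k}ˣ` acts freely on the `2^r - 1` nonzero vectors of `X`, so
`|H|` divides `2^r - 1` as well as `2^k - 1`; coprimality forces `H = 1`. Hence
`α^i X = α^j X` implies `α^i = α^j`, i.e. `i = j` for `i, j < 2^k - 1 = ord α`.
-/

open Module

open Pointwise

theorem MulAction.natCard_group_dvd_of_stabilizer_eq_bot {G S : Type*} [Group G] [MulAction G S]
    [Finite S] (h : ∀ b : S, stabilizer G b = ⊥) : Nat.card G ∣ Nat.card S :=
  ⟨_, by rw [Nat.card_congr (selfEquivOrbitsQuotientProd h), Nat.card_prod, mul_comm]⟩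

section StabilizerOfSubspace

variable {R F : Type*} [CommSemiring R] [Field F] [Algebra R F]

def Submodule.nonzeroSubMulAction (X : Submodule R F) :
    SubMulAction (MulAction.stabilizer Fˣ X) F where
  carrier := (X : Set F) \ {0}
  smul_mem' g x hx := by
    refine ⟨?_, (smul_ne_zero_iff_ne (g : Fˣ)).mpr hx.2⟩
    have hg : ((g : Fˣ) : F) • X = X := g.2
    have h := Submodule.smul_mem_pointwise_smul x ((g : Fˣ) : F) X hx.1
    rw [hg] at h
    exact h

theorem Submodule.natCard_stabilizer_units_dvd [Finite F] (X : Submodule R F) :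
    Nat.card (MulAction.stabilizer Fˣ X) ∣ Nat.card X - 1 := by
  have hfree (x : X.nonzeroSubMulAction) :
      MulAction.stabilizer (MulAction.stabilizer Fˣ X) x = ⊥ := by
    refine eq_bot_iff.mpr fun g hg ↦ ?_
    have h : (g : Fˣ) ∈ MulAction.stabilizer Fˣ (x : F) := congrArg Subtype.val hg
    rw [Module.stabilizer_units_eq_bot_of_ne_zero F x.2.2] at h
    exact Subgroup.mem_bot.mpr (Subtype.ext (Subgroup.mem_bot.mp h))
  have hcard : Nat.card X.nonzeroSubMulAction = Nat.card X - 1 := by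
    rw [← SetLike.coe_sort_coe, Nat.card_coe_set_eq]
    change ((X : Set F) \ {0}).ncard = _
    rw [Set.ncard_sdiff_singleton_of_mem X.zero_mem]
    rfl
  exact hcard ▸ MulAction.natCard_group_dvd_of_stabilizer_eq_bot hfree

theorem Submodule.stabilizer_units_eq_bot_of_coprime [Finite F] (X : Submodule R F)
    (hcop : (Nat.card Fˣ).Coprime (Nat.card X - 1)) : MulAction.stabilizer Fˣ X = ⊥ :=
  Subgroup.eq_bot_of_card_eq _ <| Nat.eq_one_of_dvd_coprimes hcop
    (Subgroup.card_subgroup_dvd_card _) X.natCard_stabilizer_units_dvd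

end StabilizerOfSubspace

theorem MulAction.injOn_pow_smul_of_stabilizer_eq_bot {G S : Type*} [Group G] [MulAction G S]
    {x : S} (hx : stabilizer G x = ⊥) (g : G) :
    Set.InjOn (fun n : ℕ ↦ g ^ n • x) (Set.Iio (orderOf g)) := by
  intro i hi j hj (hij : g ^ i • x = g ^ j • x)
  refine pow_injOn_Iio_orderOf hj hi ?_ |>.symm
  have h : (g ^ j)⁻¹ * g ^ i ∈ stabilizer G x := by
    rw [mem_stabilizer_iff, mul_smul, hij, inv_smul_smul]
  rwa [hx, Subgroup.mem_bot, inv_mul_eq_one] at h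

theorem distinct_multiples_general (k r : ℕ)
    (F : Type) [Field F] [Fintype F] [Algebra (ZMod 2) F]
    (hcard : Fintype.card F = 2 ^ k)
    (α : Fˣ) (hα : ∀ x : Fˣ, x ∈ Subgroup.zpowers α)
    (X : Submodule (ZMod 2) F) (hX : finrank (ZMod 2) X = r)
    (hcop : Nat.Coprime (2 ^ k - 1) (2 ^ r - 1)) :
    {Y : Submodule (ZMod 2) F |
      ∃ j ≤ 2 ^ k - 2,
        Y = Submodule.map (LinearMap.mulLeft (ZMod 2) ((α : F) ^ j)) X}.ncard =
      2 ^ k - 1 := by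
  have hunits : Nat.card Fˣ = 2 ^ k - 1 := by
    rw [Nat.card_units, Nat.card_eq_fintype_card, hcard]
  have hcardX : Nat.card X = 2 ^ r := by
    rw [Module.natCard_eq_pow_finrank (K := ZMod 2), Nat.card_zmod, hX]
  have hstab : MulAction.stabilizer Fˣ X = ⊥ :=
    X.stabilizer_units_eq_bot_of_coprime (hunits ▸ hcardX ▸ hcop)
  have horder : orderOf α = 2 ^ k - 1 := by
    rw [orderOf_eq_card_of_forall_mem_zpowers hα, hunits]
  have htwo : 2 ≤ 2 ^ k := hcard ▸ Fintype.one_lt_card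
  have hmap (j : ℕ) :
      Submodule.map (LinearMap.mulLeft (ZMod 2) ((α : F) ^ j)) X = α ^ j • X := rfl
  have hset : {Y : Submodule (ZMod 2) F | ∃ j ≤ 2 ^ k - 2,
      Y = Submodule.map (LinearMap.mulLeft (ZMod 2) ((α : F) ^ j)) X} =
      (fun j : ℕ ↦ α ^ j • X) '' Set.Iic (2 ^ k - 2) := by
    ext Y
    simp [hmap, eq_comm]
  have hinj : Set.InjOn (fun j : ℕ ↦ α ^ j • X) (Set.Iic (2 ^ k - 2)) :=
    (MulAction.injOn_pow_smul_of_stabilizer_eq_bot hstab α).mono fun j hj ↦ by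
      simp only [Set.mem_Iic, Set.mem_Iio, horder] at hj ⊢
      omega
  rw [hset, hinj.ncard_image, Set.ncard_Iic_nat]
  omega

/-- Multiplying an `r`-dimensional `𝔽₂`-subspace of `𝔽_{2^k}` by the powers
`α^0, α^1, …, α^{2^k-2}` of a generator `α` of the multiplicative group yields
`2^k - 1` pairwise distinct subspaces, provided `gcd(2^k-1, 2^r-1) = 1`. -/
theorem distinct_multiples (k r : ℕ) (hk : 1 ≤ k) (hr : 1 ≤ r)
    (F : Type) [Field F] [Fintype F] [Algebra (ZMod 2) F]
    (hcard : Fintype.card F = 2 ^ k)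
    (α : Fˣ) (hα : ∀ x : Fˣ, x ∈ Subgroup.zpowers α)
    (X : Submodule (ZMod 2) F) (hX : finrank (ZMod 2) X = r)
    (hcop : Nat.Coprime (2 ^ k - 1) (2 ^ r - 1)) :
    {Y : Submodule (ZMod 2) F |
      ∃ j ≤ 2 ^ k - 2,
        Y = Submodule.map (LinearMap.mulLeft (ZMod 2) ((α : F) ^ j)) X}.ncard =
      2 ^ k - 1 :=
  distinct_multiples_general k r F hcard α hα X hX hcop
end
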